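/- arXiv:2306.09999 — 7 statements merged into one kernel-verified Lean document; each statement's English description precedes it below -/
import Mathlib

section
/- Let (Z,d,ν) be an Ahlfors D-regular metric measure space with constant c ≥ 1 (Z may be bounded or unbounded), let s ∈ (0,∞) and p ∈ [1,∞) satisfy s·p < D, and set p* = p·D/(D − s·p). Then there is a constant C > 0, depending only on c, D, s and p, such that for every compactly supported measurable function f : Z → ℂ one has p* · ∫₀^∞ t^{p−1} · ν({ξ ∈ Z : |f(ξ)| > t})^{p/p*} dt ≤ C · ( ν(Z)^{−s·p/D} · ∫_Z |f|^p dν + ∬_{Z×Z} |f(ξ)−f(η)|^p / d(ξ,η)^{D+s·p} dν(ξ)dν(η) ), where all quantities are interpreted in the extended nonnegative reals (the left-hand side is the p-th power of the Lorentz L(p*,p)-norm of f, and ν(Z)^{−s·p/D} = 0 when ν(Z) = ∞). -/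
open MeasureTheory Metric Filter Set
open scoped ENNReal NNReal Topology

/-!
Dyadic decomposition. Write `a k = ν {|f| > 2 ^ k}`, `R = 2 ^ p` and `θ = p / p* = 1 - s p / D`.
The Lorentz integral is at most `2 ^ (p - 1) ∑ R ^ k a_k ^ θ`, and Hölder's inequality bounds this
sum by `R ^ (1 / θ) T` with `T = ∑ R ^ k a_(k+1) a_k ^ (θ - 1)`. The levels with `a_k > ν Z / 2`
form an initial segment of `ℤ`; their part of `T` is a geometric series, bounded through Chebyshev's
inequality by `ν Z ^ (θ - 1) ∫ |f| ^ p`. For the remaining levels, lower Ahlfors regularity gives,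
around every `ξ` with `|f ξ| > 2 ^ (k+1)`, a set of measure `≥ a_k` within distance
`(2 c a_k) ^ (1 / D)` on which `|f| ≤ 2 ^ k`, hence `|f ξ - f η| ≥ 2 ^ k`. This bounds
`R ^ k a_k ^ (θ - 1)` by the inner Gagliardo integral at `ξ`; summing over the disjoint dyadic
shells `{2 ^ (k+1) < |f| ≤ 2 ^ (k+2)}` gives the Gagliardo energy.
-/

namespace ENNReal

theorem rpow_le_rpow_of_nonpos {x y : ℝ≥0∞} {z : ℝ} (hz : z ≤ 0) (h : x ≤ y) :
    y ^ z ≤ x ^ z := by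
  rw [← neg_neg z, ENNReal.rpow_neg y, ENNReal.rpow_neg x]
  exact ENNReal.inv_le_inv.2 (ENNReal.rpow_le_rpow h (by linarith))

theorem tsum_indicator_Iic_zpow {R : ℝ≥0∞} (hR₀ : R ≠ 0) (hR : R ≠ ∞) (N : ℤ) :
    ∑' k, (Iic N).indicator (R ^ ·) k = R ^ N * (1 - R⁻¹)⁻¹ := by
  have hinj : Function.Injective fun n : ℕ => N - n := fun m n h => by simpa using h
  have hsupp : Function.support ((Iic N).indicator (R ^ ·)) ⊆ range fun n : ℕ => N - n :=
    fun k hk => ⟨(N - k).toNat, by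
      have : k ∈ Iic N := mem_of_indicator_ne_zero (Function.mem_support.1 hk)
      rw [mem_Iic] at this
      simp only; omega⟩
  rw [← hinj.tsum_eq hsupp, ← ENNReal.tsum_geometric, ← ENNReal.tsum_mul_left]
  refine tsum_congr fun n => ?_
  rw [indicator_of_mem (by simp), ENNReal.zpow_sub hR₀ hR, zpow_natCast, ENNReal.inv_pow]

theorem inv_one_sub_inv_ne_top {R : ℝ≥0∞} (hR : 1 < R) : (1 - R⁻¹)⁻¹ ≠ ∞ :=
  ENNReal.inv_ne_top.2 (tsub_pos_of_lt (ENNReal.inv_lt_one.2 hR)).ne'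

theorem tsum_rpow_mul_rpow_le {ι : Type*} (f g : ι → ℝ≥0∞) {θ : ℝ} (hθ₀ : 0 ≤ θ) (hθ₁ : θ ≤ 1) :
    ∑' i, f i ^ θ * g i ^ (1 - θ) ≤ (∑' i, f i) ^ θ * (∑' i, g i) ^ (1 - θ) := by
  let _ : MeasurableSpace ι := ⊤
  simp only [← lintegral_count]
  exact lintegral_mul_norm_pow_le measurable_from_top.aemeasurable
    measurable_from_top.aemeasurable hθ₀ (by linarith) (by ring)

theorem mul_rpow_eq_rpow_mul_rpow_of_le {θ : ℝ} (hθ₀ : 0 < θ) (hθ₁ : θ < 1) {w x y : ℝ≥0∞}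
    (hw₀ : w ≠ 0) (hw : w ≠ ∞) (hx : x ≠ ∞) (hyx : y ≤ x) :
    w * y ^ θ = (w * (y * x ^ (θ - 1))) ^ θ * (w * x ^ θ) ^ (1 - θ) := by
  rcases eq_or_ne y 0 with rfl | hy
  · simp [ENNReal.zero_rpow_of_pos hθ₀]
  have hx₀ : x ≠ 0 := fun h => hy (le_antisymm (h ▸ hyx) bot_le)
  rw [ENNReal.mul_rpow_of_nonneg _ _ hθ₀.le, ENNReal.mul_rpow_of_nonneg _ _ hθ₀.le,
    ENNReal.mul_rpow_of_nonneg _ _ (by linarith : (0:ℝ) ≤ 1 - θ),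
    ← ENNReal.rpow_mul x, ← ENNReal.rpow_mul x]
  calc w * y ^ θ
      = w ^ (θ + (1 - θ)) * (y ^ θ * x ^ ((θ - 1) * θ + θ * (1 - θ))) := by
        rw [show θ + (1 - θ) = 1 by ring, show (θ - 1) * θ + θ * (1 - θ) = 0 by ring,
          ENNReal.rpow_one, ENNReal.rpow_zero, mul_one]
    _ = w ^ θ * w ^ (1 - θ) * (y ^ θ * (x ^ ((θ - 1) * θ) * x ^ (θ * (1 - θ)))) := by
        rw [ENNReal.rpow_add _ _ hw₀ hw, ENNReal.rpow_add _ _ hx₀ hx]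
    _ = w ^ θ * (y ^ θ * x ^ ((θ - 1) * θ)) * (w ^ (1 - θ) * x ^ (θ * (1 - θ))) := by ring

theorem le_rpow_inv_mul_of_le_mul_rpow {S T K : ℝ≥0∞} {θ : ℝ} (hθ : 0 < θ) (hS : S ≠ ∞)
    (h : S ≤ K * T ^ θ * S ^ (1 - θ)) : S ≤ K ^ θ⁻¹ * T := by
  rcases eq_or_ne S 0 with rfl | hS₀
  · exact zero_le
  have hSθ : S ^ θ ≤ K * T ^ θ :=
    calc S ^ θ = S * S ^ (θ - 1) := by
          nth_rw 2 [← ENNReal.rpow_one S]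
          rw [← ENNReal.rpow_add _ _ hS₀ hS, add_sub_cancel]
      _ ≤ K * T ^ θ * S ^ (1 - θ) * S ^ (θ - 1) := by gcongr
      _ = K * T ^ θ := by
          rw [mul_assoc, ← ENNReal.rpow_add _ _ hS₀ hS, sub_add_sub_cancel', sub_self,
            ENNReal.rpow_zero, mul_one]
  calc S = (S ^ θ) ^ θ⁻¹ := by rw [← ENNReal.rpow_mul, mul_inv_cancel₀ hθ.ne', ENNReal.rpow_one]
    _ ≤ (K * T ^ θ) ^ θ⁻¹ := by gcongr
    _ = K ^ θ⁻¹ * T := by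
        rw [ENNReal.mul_rpow_of_nonneg _ _ (inv_nonneg.2 hθ.le), ← ENNReal.rpow_mul,
          mul_inv_cancel₀ hθ.ne', ENNReal.rpow_one]

theorem rpow_div_two_le {V : ℝ≥0∞} (hV : V ≠ ∞) {γ : ℝ} (hγ : -1 ≤ γ) :
    (V / 2) ^ γ ≤ 2 * V ^ γ := by
  rw [div_eq_mul_inv, ENNReal.mul_rpow_of_ne_top hV (by simp), mul_comm, ENNReal.inv_rpow,
    ← ENNReal.rpow_neg]
  gcongr
  calc (2 : ℝ≥0∞) ^ (-γ) ≤ 2 ^ (1 : ℝ) :=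
        ENNReal.rpow_le_rpow_of_exponent_le (by norm_num) (by linarith)
    _ = 2 := ENNReal.rpow_one 2

theorem mul_add_mul_le_add_mul_add (a b x y : ℝ≥0∞) : a * x + b * y ≤ (a + b) * (x + y) :=
  calc a * x + b * y ≤ a * x + b * y + (a * y + b * x) := le_self_add
    _ = (a + b) * (x + y) := by ring

theorem two_rpow_zpow (p : ℝ) (k : ℤ) :
    ((2 : ℝ≥0∞) ^ p) ^ k = ENNReal.ofReal ((2 : ℝ) ^ k) ^ p := by
  have h2 : ENNReal.ofReal ((2 : ℝ) ^ k) = (2 : ℝ≥0∞) ^ k := by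
    rw [show (2 : ℝ) ^ k = ((2 : ℝ≥0) ^ k : ℝ≥0) by simp, ENNReal.ofReal_coe_nnreal,
      ENNReal.coe_zpow two_ne_zero, ENNReal.coe_ofNat]
  rw [h2, ← ENNReal.rpow_intCast, ← ENNReal.rpow_intCast, ← ENNReal.rpow_mul,
    ← ENNReal.rpow_mul, mul_comm]

end ENNReal

section DyadicSums

variable {R : ℝ≥0∞} {θ : ℝ} {a : ℤ → ℝ≥0∞}

-- Truncating from above keeps the sum finite, and the shift `k ↦ k + 1` creates no boundary term.
theorem tsum_indicator_Iic_zpow_mul_rpow_le (hR₀ : R ≠ 0) (hR : R ≠ ∞) (hθ₀ : 0 < θ)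
    (hθ₁ : θ < 1) (ha : Antitone a) (hfin : ∀ k, a k ≠ ∞) (N : ℤ) :
    ∑' k, (Iic N).indicator (fun k => R ^ k * a k ^ θ) k ≤
      R * (∑' k, R ^ k * (a (k + 1) * a k ^ (θ - 1))) ^ θ *
        (∑' k, (Iic N).indicator (fun k => R ^ k * a k ^ θ) k) ^ (1 - θ) := by
  set T := ∑' k, R ^ k * (a (k + 1) * a k ^ (θ - 1))
  set S := ∑' k, (Iic N).indicator (fun k => R ^ k * a k ^ θ) k
  have hshift : S ≤ R * ∑' k, (Iic N).indicator (fun k => R ^ k * a (k + 1) ^ θ) k :=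
    calc S = ∑' k, (Iic N).indicator (fun k => R ^ k * a k ^ θ) (k + 1) :=
          ((Equiv.addRight (1 : ℤ)).tsum_eq _).symm
      _ ≤ ∑' k, R * (Iic N).indicator (fun k => R ^ k * a (k + 1) ^ θ) k := by
          refine ENNReal.tsum_le_tsum fun k => ?_
          by_cases hk : k + 1 ∈ Iic N
          · rw [indicator_of_mem hk, indicator_of_mem (show k ∈ Iic N by simp at hk ⊢; omega),
              ENNReal.zpow_add hR₀ hR, zpow_one, mul_comm (R ^ k) R, mul_assoc]
          · rw [indicator_of_notMem hk]
            exact zero_le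
      _ = _ := ENNReal.tsum_mul_left
  have hHolder :
      ∑' k, (Iic N).indicator (fun k => R ^ k * a (k + 1) ^ θ) k ≤ T ^ θ * S ^ (1 - θ) :=
    calc _ = ∑' k, (Iic N).indicator (fun k => R ^ k * (a (k + 1) * a k ^ (θ - 1))) k ^ θ *
            (Iic N).indicator (fun k => R ^ k * a k ^ θ) k ^ (1 - θ) := by
          refine tsum_congr fun k => ?_
          by_cases hk : k ∈ Iic N
          · simp only [indicator_of_mem hk]
            exact ENNReal.mul_rpow_eq_rpow_mul_rpow_of_le hθ₀ hθ₁
              (ENNReal.zpow_pos hR₀ hR k).ne' (ENNReal.zpow_ne_top hR₀ hR k) (hfin k)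
              (ha (Int.le_add_one le_rfl))
          · simp only [indicator_of_notMem hk, ENNReal.zero_rpow_of_pos hθ₀, zero_mul]
      _ ≤ (∑' k, (Iic N).indicator (fun k => R ^ k * (a (k + 1) * a k ^ (θ - 1))) k) ^ θ *
            S ^ (1 - θ) :=
          ENNReal.tsum_rpow_mul_rpow_le _ _ hθ₀.le hθ₁.le
      _ ≤ T ^ θ * S ^ (1 - θ) := by
          gcongr
          exact ENNReal.tsum_le_tsum fun k => indicator_le_self _ _ k
  calc S ≤ R * (T ^ θ * S ^ (1 - θ)) := hshift.trans (by gcongr)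
    _ = R * T ^ θ * S ^ (1 - θ) := by ring

theorem tsum_zpow_mul_rpow_le (hR : 1 < R) (hR' : R ≠ ∞) (hθ₀ : 0 < θ) (hθ₁ : θ < 1)
    (ha : Antitone a) {M : ℝ≥0∞} (hM : M ≠ ∞) (haM : ∀ k, a k ≤ M) :
    ∑' k, R ^ k * a k ^ θ ≤ R ^ θ⁻¹ * ∑' k, R ^ k * (a (k + 1) * a k ^ (θ - 1)) := by
  have hR₀ : R ≠ 0 := (zero_lt_one.trans hR).ne'
  have hfin : ∀ k, a k ≠ ∞ := fun k => ne_top_of_le_ne_top hM (haM k)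
  have hpartial (N : ℤ) : ∑' k, (Iic N).indicator (fun k => R ^ k * a k ^ θ) k ≤
      R ^ θ⁻¹ * ∑' k, R ^ k * (a (k + 1) * a k ^ (θ - 1)) := by
    have hbound : ∑' k, (Iic N).indicator (fun k => R ^ k * a k ^ θ) k ≤
        R ^ N * (1 - R⁻¹)⁻¹ * M ^ θ :=
      calc _ ≤ ∑' k, (Iic N).indicator (R ^ ·) k * M ^ θ := by
            refine ENNReal.tsum_le_tsum fun k => ?_
            by_cases hk : k ∈ Iic N
            · simp only [indicator_of_mem hk]
              gcongr
              exact haM k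
            · simp only [indicator_of_notMem hk, zero_mul, le_refl]
        _ = R ^ N * (1 - R⁻¹)⁻¹ * M ^ θ := by
            rw [ENNReal.tsum_mul_right, ENNReal.tsum_indicator_Iic_zpow hR₀ hR']
    have hfinN : R ^ N * (1 - R⁻¹)⁻¹ * M ^ θ ≠ ∞ :=
      ENNReal.mul_ne_top (ENNReal.mul_ne_top (ENNReal.zpow_ne_top hR₀ hR' N)
        (ENNReal.inv_one_sub_inv_ne_top hR))
        (ENNReal.rpow_ne_top_of_nonneg hθ₀.le hM)
    exact ENNReal.le_rpow_inv_mul_of_le_mul_rpow hθ₀ (ne_top_of_le_ne_top hfinN hbound)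
      (tsum_indicator_Iic_zpow_mul_rpow_le hR₀ hR' hθ₀ hθ₁ ha hfin N)
  rw [ENNReal.tsum_eq_iSup_sum]
  refine iSup_le fun u => ?_
  obtain ⟨N, hN⟩ := u.bddAbove
  calc ∑ k ∈ u, R ^ k * a k ^ θ = ∑ k ∈ u, (Iic N).indicator (fun k => R ^ k * a k ^ θ) k :=
        Finset.sum_congr rfl fun k hk =>
          (indicator_of_mem (show k ∈ Iic N from hN (Finset.mem_coe.2 hk))
            (fun k => R ^ k * a k ^ θ)).symm
    _ ≤ _ := ENNReal.sum_le_tsum u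
    _ ≤ _ := hpartial N

theorem tsum_indicator_zpow_mul_tsum_le (hR₀ : R ≠ 0) (hR : R ≠ ∞) {G : Set ℤ}
    (hG : IsUpperSet G) {b m : ℤ → ℝ≥0∞} (hb : Monotone b) :
    ∑' k, G.indicator (fun k => R ^ k * ((∑' n : ℕ, m (k + n)) * b k)) k ≤
      (1 - R⁻¹)⁻¹ * ∑' j, G.indicator (fun j => R ^ j * (b j * m j)) j := by
  set U := ∑' j, G.indicator (fun j => R ^ j * (b j * m j)) j
  have hterm (n : ℕ) (k : ℤ) : G.indicator (fun k => R ^ k * (m (k + n) * b k)) k ≤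
      R⁻¹ ^ n * G.indicator (fun j => R ^ j * (b j * m j)) (k + n) := by
    by_cases hk : k ∈ G
    · rw [indicator_of_mem hk, indicator_of_mem (hG (by omega) hk)]
      have hRn : R ^ k = R⁻¹ ^ n * R ^ (k + n) := by
        rw [ENNReal.zpow_add hR₀ hR, zpow_natCast, mul_left_comm, ← ENNReal.inv_pow,
          ENNReal.inv_mul_cancel (pow_ne_zero _ hR₀) (ENNReal.pow_ne_top hR), mul_one]
      calc R ^ k * (m (k + n) * b k) ≤ R ^ k * (m (k + n) * b (k + n)) := by
            gcongr
            exact hb (by omega)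
        _ = _ := by rw [hRn]; ring
    · rw [indicator_of_notMem hk]
      exact zero_le
  calc ∑' k, G.indicator (fun k => R ^ k * ((∑' n : ℕ, m (k + n)) * b k)) k
      = ∑' n : ℕ, ∑' k, G.indicator (fun k => R ^ k * (m (k + n) * b k)) k := by
        rw [ENNReal.tsum_comm]
        refine tsum_congr fun k => ?_
        by_cases hk : k ∈ G
        · simp only [indicator_of_mem hk, ENNReal.tsum_mul_right, ENNReal.tsum_mul_left]
        · simp only [indicator_of_notMem hk, tsum_zero]
    _ ≤ ∑' n : ℕ, R⁻¹ ^ n * U := by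
        refine ENNReal.tsum_le_tsum fun n => (ENNReal.tsum_le_tsum (hterm n)).trans_eq ?_
        rw [ENNReal.tsum_mul_left]
        exact congrArg _ ((Equiv.addRight (n : ℤ)).tsum_eq _)
    _ = (1 - R⁻¹)⁻¹ * U := by rw [ENNReal.tsum_mul_right, ENNReal.tsum_geometric]

theorem bddAbove_setOf_lt_two_mul (ha₀ : Tendsto a atTop (𝓝 0)) {V : ℝ≥0∞} (hV₀ : V ≠ 0) :
    BddAbove {k | V < 2 * a k} := by
  obtain ⟨N, hN⟩ := eventually_atTop.1 (ha₀.eventually (gt_mem_nhds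
    (ENNReal.div_pos hV₀ (by norm_num : (2 : ℝ≥0∞) ≠ ∞))))
  refine ⟨N, fun k (hk : V < 2 * a k) => not_lt.1 fun hNk => lt_asymm hk ?_⟩
  rw [mul_comm]
  exact ENNReal.mul_lt_of_lt_div (hN k hNk.le)

theorem tsum_indicator_zpow_mul_rpow_le_of_tendsto (hR : 1 < R) (hR' : R ≠ ∞) (hθ₀ : 0 ≤ θ)
    (hθ₁ : θ ≤ 1) {V I : ℝ≥0∞} (haV : ∀ k, a k ≤ V)
    (ha₀ : Tendsto a atTop (𝓝 0)) (hI : ∀ k, R ^ k * a k ≤ I) :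
    ∑' k, {k | V < 2 * a k}.indicator (fun k => R ^ k * (a (k + 1) * a k ^ (θ - 1))) k ≤
      4 * (1 - R⁻¹)⁻¹ * (V ^ (θ - 1) * I) := by
  set H := {k | V < 2 * a k}
  rcases H.eq_empty_or_nonempty with hH | ⟨k₀, hk₀⟩
  · simp [hH]
  have hV₀ : V ≠ 0 := by
    rintro rfl
    simp [H, le_zero_iff.1 (haV k₀)] at hk₀
  have hbdd := bddAbove_setOf_lt_two_mul ha₀ hV₀
  set k₁ := sSup H
  have hk₁ : k₁ ∈ H := Int.csSup_mem ⟨k₀, hk₀⟩ hbdd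
  have hhalf (k : ℤ) (hk : k ∈ H) : V / 2 ≤ a k :=
    ENNReal.div_le_of_le_mul (by rw [mul_comm]; exact le_of_lt hk)
  calc ∑' k, H.indicator (fun k => R ^ k * (a (k + 1) * a k ^ (θ - 1))) k
      ≤ ∑' k, (Iic k₁).indicator (R ^ ·) k * (V * (V / 2) ^ (θ - 1)) := by
        refine ENNReal.tsum_le_tsum fun k => ?_
        by_cases hk : k ∈ H
        · rw [indicator_of_mem hk, indicator_of_mem (show k ∈ Iic k₁ from le_csSup hbdd hk)]
          exact mul_le_mul' le_rfl (mul_le_mul' (haV _)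
            (ENNReal.rpow_le_rpow_of_nonpos (by linarith : θ - 1 ≤ 0) (hhalf k hk)))
        · rw [indicator_of_notMem hk]
          exact zero_le
    _ = R ^ k₁ * V * (1 - R⁻¹)⁻¹ * (V / 2) ^ (θ - 1) := by
        rw [ENNReal.tsum_mul_right, ENNReal.tsum_indicator_Iic_zpow (zero_lt_one.trans hR).ne' hR']
        ring
    _ ≤ 2 * I * (1 - R⁻¹)⁻¹ * (2 * V ^ (θ - 1)) := by
        have hRV : R ^ k₁ * V ≤ 2 * I :=
          calc R ^ k₁ * V ≤ R ^ k₁ * (2 * a k₁) := by gcongr; exact le_of_lt hk₁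
            _ = 2 * (R ^ k₁ * a k₁) := by ring
            _ ≤ 2 * I := by gcongr; exact hI k₁
        exact mul_le_mul' (mul_le_mul_left hRV _)
          (ENNReal.rpow_div_two_le (ne_top_of_lt hk₀) (by linarith))
    _ = 4 * (1 - R⁻¹)⁻¹ * (V ^ (θ - 1) * I) := by
        rw [show (4 : ℝ≥0∞) = 2 * 2 by norm_num]
        ring

end DyadicSums

theorem Real.Ioi_zero_eq_iUnion_Ico_zpow {b : ℝ} (hb : 1 < b) :
    Ioi (0 : ℝ) = ⋃ k : ℤ, Ico (b ^ k) (b ^ (k + 1)) := by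
  ext t
  simp only [mem_Ioi, mem_iUnion]
  exact ⟨fun ht => exists_mem_Ico_zpow ht hb,
    fun ⟨k, hk⟩ => (zpow_pos (zero_lt_one.trans hb) k).trans_le hk.1⟩

theorem Real.Ioi_zpow_eq_iUnion_Ioc {b : ℝ} (hb : 1 < b) (k : ℤ) :
    Ioi (b ^ k) = ⋃ n : ℕ, Ioc (b ^ (k + n)) (b ^ (k + n + 1)) := by
  ext t
  simp only [mem_Ioi, mem_iUnion, mem_Ioc]
  constructor
  · intro ht
    obtain ⟨m, hm⟩ := exists_mem_Ioc_zpow ((zpow_pos (zero_lt_one.trans hb) k).trans ht) hb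
    have hkm : k ≤ m := by
      by_contra! hmk
      have := zpow_le_zpow_right₀ hb.le (show m + 1 ≤ k by omega)
      linarith [hm.2]
    exact ⟨(m - k).toNat, by rwa [show k + ((m - k).toNat : ℤ) = m by omega]⟩
  · rintro ⟨n, hn, -⟩
    exact (zpow_le_zpow_right₀ hb.le (by omega)).trans_lt hn

theorem lintegral_Ioi_rpow_mul_le_tsum {g : ℝ → ℝ≥0∞} (hg : Antitone g) {p : ℝ} (hp : 1 ≤ p) :
    ∫⁻ t in Ioi 0, ENNReal.ofReal (t ^ (p - 1)) * g t ≤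
      2 ^ (p - 1) * ∑' k : ℤ, ((2 : ℝ≥0∞) ^ p) ^ k * g (2 ^ k) := by
  have hdisj : Pairwise (Function.onFun Disjoint fun k : ℤ => Ico ((2 : ℝ) ^ k) (2 ^ (k + 1))) :=
    (zpow_right_mono₀ one_le_two).pairwise_disjoint_on_Ico_succ
  rw [Real.Ioi_zero_eq_iUnion_Ico_zpow one_lt_two,
    lintegral_iUnion (fun _ => measurableSet_Ico) hdisj,
    ← ENNReal.tsum_mul_left]
  refine ENNReal.tsum_le_tsum fun k => ?_
  have h2k : (0 : ℝ) < 2 ^ k := zpow_pos two_pos k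
  set x := ENNReal.ofReal ((2 : ℝ) ^ k)
  have hsucc : ENNReal.ofReal ((2 : ℝ) ^ (k + 1)) = 2 * x := by
    rw [zpow_add_one₀ two_ne_zero, mul_comm, ENNReal.ofReal_mul zero_le_two, ENNReal.ofReal_ofNat]
  calc ∫⁻ t in Ico ((2 : ℝ) ^ k) (2 ^ (k + 1)), ENNReal.ofReal (t ^ (p - 1)) * g t
      ≤ ∫⁻ _ in Ico ((2 : ℝ) ^ k) (2 ^ (k + 1)), ENNReal.ofReal (((2 : ℝ) ^ (k + 1)) ^ (p - 1)) *
          g (2 ^ k) := by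
        refine setLIntegral_mono' measurableSet_Ico fun t ht => ?_
        gcongr
        · exact h2k.le.trans ht.1
        · exact ht.2.le
        · exact hg ht.1
    _ = (2 * x) ^ (p - 1) * x * g (2 ^ k) := by
        rw [setLIntegral_const, Real.volume_Ico, ← ENNReal.ofReal_rpow_of_pos (zpow_pos two_pos _),
          hsucc, show (2 : ℝ) ^ (k + 1) - (2 : ℝ) ^ k = 2 ^ k by
            rw [zpow_add_one₀ two_ne_zero]; ring]
        ring
    _ = 2 ^ (p - 1) * (((2 : ℝ≥0∞) ^ p) ^ k * g (2 ^ k)) := by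
        have hxp : x ^ (p - 1) * x = x ^ p := by
          nth_rw 2 [← ENNReal.rpow_one x]
          rw [← ENNReal.rpow_add_of_add_pos ENNReal.ofReal_ne_top _ _ (by linarith), sub_add_cancel]
        rw [ENNReal.mul_rpow_of_nonneg _ _ (by linarith), ENNReal.two_rpow_zpow, ← hxp]
        ring

section DyadicLevels

variable {Z E : Type*} [NormedAddCommGroup E] {f : Z → E}

def dyadicShell (f : Z → E) (k : ℤ) : Set Z := {ξ | ‖f ξ‖ ∈ Ioc ((2 : ℝ) ^ k) (2 ^ (k + 1))}

theorem dyadicShell_subset_norm_gt (k : ℤ) :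
    dyadicShell f (k + 1) ⊆ {ξ | (2 : ℝ) ^ k < ‖f ξ‖} :=
  fun _ hξ => (zpow_le_zpow_right₀ one_le_two (Int.le_add_one le_rfl)).trans_lt hξ.1

theorem pairwise_disjoint_dyadicShell (f : Z → E) :
    Pairwise (Function.onFun Disjoint (dyadicShell f)) := fun _ _ hij =>
  ((zpow_right_mono₀ (one_le_two : (1 : ℝ) ≤ 2)).pairwise_disjoint_on_Ioc_succ hij).preimage _

variable [MeasurableSpace Z] {ν : Measure Z}

def dyadicLevel (ν : Measure Z) (f : Z → E) (k : ℤ) : ℝ≥0∞ := ν {ξ | (2 : ℝ) ^ k < ‖f ξ‖}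

theorem antitone_measure_norm_gt (ν : Measure Z) (f : Z → E) :
    Antitone fun t : ℝ => ν {ξ | t < ‖f ξ‖} :=
  fun _ _ hst => measure_mono fun _ hξ => hst.trans_lt hξ

theorem antitone_dyadicLevel (ν : Measure Z) (f : Z → E) : Antitone (dyadicLevel ν f) :=
  (antitone_measure_norm_gt ν f).comp_monotone (zpow_right_mono₀ one_le_two)

theorem dyadicLevel_le_measure_support (k : ℤ) : dyadicLevel ν f k ≤ ν (Function.support f) :=
  measure_mono fun _ hξ => norm_pos_iff.1 ((zpow_pos two_pos k).trans hξ)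

variable [MeasurableSpace E] [OpensMeasurableSpace E]

theorem measurableSet_dyadicShell (hf : Measurable f) (k : ℤ) : MeasurableSet (dyadicShell f k) :=
  hf.norm measurableSet_Ioc

theorem dyadicLevel_eq_tsum (hf : Measurable f) (k : ℤ) :
    dyadicLevel ν f k = ∑' n : ℕ, ν (dyadicShell f (k + n)) := by
  have hunion : {ξ | (2 : ℝ) ^ k < ‖f ξ‖} = ⋃ n : ℕ, dyadicShell f (k + n) := by
    ext ξ
    simpa [dyadicShell] using Set.ext_iff.1 (Real.Ioi_zpow_eq_iUnion_Ioc one_lt_two k) ‖f ξ‖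
  rw [dyadicLevel, hunion]
  exact measure_iUnion (fun m n hmn => pairwise_disjoint_dyadicShell f (by omega))
    fun n => measurableSet_dyadicShell hf _

theorem ofReal_rpow_mul_measure_norm_gt_le (hf : Measurable f) (t : ℝ) {p : ℝ} (hp : 0 ≤ p) :
    ENNReal.ofReal t ^ p * ν {ξ | t < ‖f ξ‖} ≤ ∫⁻ ξ, (‖f ξ‖₊ : ℝ≥0∞) ^ p ∂ν :=
  calc ENNReal.ofReal t ^ p * ν {ξ | t < ‖f ξ‖}
      ≤ ENNReal.ofReal t ^ p * ν {ξ | ENNReal.ofReal t ^ p ≤ (‖f ξ‖₊ : ℝ≥0∞) ^ p} := by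
        refine mul_le_mul' le_rfl (measure_mono fun ξ hξ => ENNReal.rpow_le_rpow ?_ hp)
        rw [← enorm_eq_nnnorm, ← ofReal_norm]
        exact ENNReal.ofReal_le_ofReal (le_of_lt hξ)
    _ ≤ _ := mul_meas_ge_le_lintegral₀ (hf.nnnorm.coe_nnreal_ennreal.pow_const p).aemeasurable _

theorem tendsto_dyadicLevel_atTop (hf : Measurable f) {k₀ : ℤ} (hk₀ : dyadicLevel ν f k₀ ≠ ∞) :
    Tendsto (dyadicLevel ν f) atTop (𝓝 0) := by
  have hempty : ⋂ k : ℤ, {ξ | (2 : ℝ) ^ k < ‖f ξ‖} = ∅ := by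
    refine eq_empty_of_forall_notMem fun ξ hξ => ?_
    obtain ⟨n, hn⟩ := pow_unbounded_of_one_lt ‖f ξ‖ one_lt_two
    exact (mem_iInter.1 hξ n).not_gt (by simpa using hn)
  have := tendsto_measure_iInter_atTop (s := fun k : ℤ => {ξ | (2 : ℝ) ^ k < ‖f ξ‖})
    (fun k => (measurableSet_lt measurable_const hf.norm).nullMeasurableSet)
    (fun j k hjk ξ hξ =>
      show (2 : ℝ) ^ j < ‖f ξ‖ from (zpow_le_zpow_right₀ one_le_two hjk).trans_lt hξ) ⟨k₀, hk₀⟩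
  rwa [hempty, measure_empty] at this

end DyadicLevels

section AhlforsRegular

variable {Z : Type*} [MetricSpace Z] [MeasurableSpace Z] {ν : Measure Z} {c D : ℝ}

def IsLowerAhlforsRegular (ν : Measure Z) (c D : ℝ) : Prop :=
  ∀ (z : Z) (r : ℝ), 0 < r → ENNReal.ofReal r < ediam (univ : Set Z) →
    ENNReal.ofReal (c⁻¹ * r ^ D) ≤ ν (ball z r)

def IsUpperAhlforsRegular (ν : Measure Z) (c D : ℝ) : Prop :=
  ∀ (z : Z) (r : ℝ), 0 < r → ENNReal.ofReal r < ediam (univ : Set Z) →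
    ν (ball z r) ≤ ENNReal.ofReal (c * r ^ D)

theorem isLocallyFiniteMeasure_of_isUpperAhlforsRegular (hperf : ∀ z : Z, (𝓝[≠] z).NeBot)
    (hup : IsUpperAhlforsRegular ν c D) :
    IsLocallyFiniteMeasure ν := by
  refine ⟨fun z => ?_⟩
  obtain ⟨y, hy⟩ := (hperf z).nonempty_of_mem self_mem_nhdsWithin
  have hyz : 0 < dist y z := dist_pos.2 hy
  refine ⟨ball z (dist y z / 2), ball_mem_nhds z (half_pos hyz),
    (hup z _ (half_pos hyz) ?_).trans_lt ENNReal.ofReal_lt_top⟩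
  calc ENNReal.ofReal (dist y z / 2) < ENNReal.ofReal (dist y z) :=
        (ENNReal.ofReal_lt_ofReal_iff hyz).2 (half_lt_self hyz)
    _ = edist y z := (edist_dist y z).symm
    _ ≤ ediam univ := edist_le_ediam_of_mem (mem_univ _) (mem_univ _)

variable [OpensMeasurableSpace Z]

theorem exists_measurableSet_edist_le_measure_ge (hlow : IsLowerAhlforsRegular ν c D) (ξ : Z)
    {r : ℝ} (hr : 0 < r) :
    ∃ B, MeasurableSet B ∧ min (ENNReal.ofReal (c⁻¹ * r ^ D)) (ν univ) ≤ ν B ∧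
      ∀ η ∈ B, edist ξ η ≤ ENNReal.ofReal r := by
  by_cases hdiam : ENNReal.ofReal r < ediam (univ : Set Z)
  · refine ⟨ball ξ r, measurableSet_ball, min_le_of_left_le (hlow ξ r hr hdiam), fun η hη => ?_⟩
    rw [edist_dist, dist_comm]
    exact ENNReal.ofReal_le_ofReal (mem_ball.1 hη).le
  · exact ⟨univ, MeasurableSet.univ, min_le_right _ _, fun η _ =>
      (edist_le_ediam_of_mem (mem_univ _) (mem_univ _)).trans (not_lt.1 hdiam)⟩

-- The radius makes `c⁻¹ r ^ D = 2 ν S`, so at least half of the ball misses `S`.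
theorem exists_measurableSet_disjoint_measure_ge (hlow : IsLowerAhlforsRegular ν c D) (hc : 0 < c)
    (hD : 0 < D) (ξ : Z) {S : Set Z}
    (hS : MeasurableSet S) (hS₀ : ν S ≠ 0) (hS_top : ν S ≠ ∞) (hSZ : 2 * ν S ≤ ν univ) :
    ∃ W, MeasurableSet W ∧ Disjoint W S ∧ ν S ≤ ν W ∧
      ∀ η ∈ W, edist ξ η ≤ ENNReal.ofReal ((2 * c * (ν S).toReal) ^ D⁻¹) := by
  have hL : 0 < (ν S).toReal := ENNReal.toReal_pos hS₀ hS_top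
  obtain ⟨B, hB, hBν, hBd⟩ :=
    exists_measurableSet_edist_le_measure_ge hlow ξ
      (by positivity : 0 < (2 * c * (ν S).toReal) ^ D⁻¹)
  have hball : ENNReal.ofReal (c⁻¹ * ((2 * c * (ν S).toReal) ^ D⁻¹) ^ D) = 2 * ν S := by
    rw [← Real.rpow_mul (by positivity), inv_mul_cancel₀ hD.ne', Real.rpow_one,
      show c⁻¹ * (2 * c * (ν S).toReal) = 2 * (ν S).toReal by field_simp,
      ENNReal.ofReal_mul zero_le_two, ENNReal.ofReal_ofNat, ENNReal.ofReal_toReal hS_top]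
  have h2S : ν S + ν S ≤ ν B := by
    rw [← two_mul]
    exact (le_min hball.ge hSZ).trans hBν
  refine ⟨B \ S, hB.diff hS, disjoint_sdiff_left, ?_, fun η hη => hBd η hη.1⟩
  exact (ENNReal.le_sub_of_add_le_left hS_top h2S).trans le_measure_sdiff

end AhlforsRegular

section FractionalEnergy

variable {Z E : Type*} [MetricSpace Z] [MeasurableSpace Z] [NormedAddCommGroup E]
  {ν : Measure Z} {f : Z → E} {p β : ℝ}

noncomputable def gagliardoEnergy (ν : Measure Z) (f : Z → E) (p β : ℝ) : ℝ≥0∞ :=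
  ∫⁻ ξ, ∫⁻ η, (‖f ξ - f η‖₊ : ℝ≥0∞) ^ p / edist ξ η ^ β ∂ν ∂ν

theorem le_lintegral_rpow_div_edist_rpow {ξ : Z} {W : Set Z} (hW : MeasurableSet W) {t : ℝ}
    {ρ : ℝ≥0∞} (hp : 0 ≤ p) (hβ : 0 ≤ β) (ht : ∀ η ∈ W, t ≤ ‖f ξ - f η‖)
    (hρ : ∀ η ∈ W, edist ξ η ≤ ρ) :
    ENNReal.ofReal t ^ p / ρ ^ β * ν W ≤
      ∫⁻ η, (‖f ξ - f η‖₊ : ℝ≥0∞) ^ p / edist ξ η ^ β ∂ν :=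
  calc _ = ∫⁻ _ in W, ENNReal.ofReal t ^ p / ρ ^ β ∂ν := (setLIntegral_const _ _).symm
    _ ≤ ∫⁻ η in W, (‖f ξ - f η‖₊ : ℝ≥0∞) ^ p / edist ξ η ^ β ∂ν := by
        refine setLIntegral_mono' hW fun η hη => ENNReal.div_le_div
          (ENNReal.rpow_le_rpow ?_ hp) (ENNReal.rpow_le_rpow (hρ η hη) hβ)
        rw [← enorm_eq_nnnorm, ← ofReal_norm]
        exact ENNReal.ofReal_le_ofReal (ht η hη)
    _ ≤ _ := setLIntegral_le_lintegral _ _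

variable [OpensMeasurableSpace Z] [MeasurableSpace E] [OpensMeasurableSpace E] {c D : ℝ}

theorem ofReal_rpow_mul_measure_rpow_le_lintegral (hlow : IsLowerAhlforsRegular ν c D)
    (hf : Measurable f) (hc : 0 < c) (hD : 0 < D)
    (hp : 0 ≤ p) (hβ : 0 ≤ β) {ξ : Z} {t : ℝ} (hξ : 2 * t < ‖f ξ‖)
    (h₀ : ν {η | t < ‖f η‖} ≠ 0) (h_top : ν {η | t < ‖f η‖} ≠ ∞)
    (hZ : 2 * ν {η | t < ‖f η‖} ≤ ν univ) :
    ENNReal.ofReal t ^ p * ν {η | t < ‖f η‖} ^ (1 - β / D) ≤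
      ENNReal.ofReal ((2 * c) ^ (β / D)) *
        ∫⁻ η, (‖f ξ - f η‖₊ : ℝ≥0∞) ^ p / edist ξ η ^ β ∂ν := by
  set S := {η | t < ‖f η‖}
  set C := ENNReal.ofReal ((2 * c) ^ (β / D))
  have hL : 0 < (ν S).toReal := ENNReal.toReal_pos h₀ h_top
  obtain ⟨W, hW, hWS, hSW, hWd⟩ := exists_measurableSet_disjoint_measure_ge hlow hc hD ξ
    (measurableSet_lt measurable_const hf.norm) h₀ h_top hZ
  have hgap (η : Z) (hη : η ∈ W) : t ≤ ‖f ξ - f η‖ := by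
    have : ‖f η‖ ≤ t := not_lt.1 fun h => hWS.notMem_of_mem_left hη h
    linarith [norm_sub_norm_le (f ξ) (f η)]
  have hρ : ENNReal.ofReal ((2 * c * (ν S).toReal) ^ D⁻¹) ^ β = C * ν S ^ (β / D) := by
    rw [ENNReal.ofReal_rpow_of_nonneg (by positivity) hβ, ← Real.rpow_mul (by positivity),
      inv_mul_eq_div, Real.mul_rpow (by positivity) hL.le, ENNReal.ofReal_mul (by positivity),
      ← ENNReal.ofReal_rpow_of_pos hL, ENNReal.ofReal_toReal h_top]
  have hC₀ : C ≠ 0 := (ENNReal.ofReal_pos.2 (by positivity)).ne'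
  calc ENNReal.ofReal t ^ p * ν S ^ (1 - β / D)
      = C * (ENNReal.ofReal t ^ p / (C * ν S ^ (β / D)) * ν S) := by
        rw [ENNReal.rpow_sub _ _ h₀ h_top, ENNReal.rpow_one, ENNReal.div_eq_inv_mul,
          ENNReal.div_eq_inv_mul, ENNReal.mul_inv (Or.inl hC₀) (Or.inl ENNReal.ofReal_ne_top)]
        calc _ = C * C⁻¹ * (ENNReal.ofReal t ^ p * ((ν S ^ (β / D))⁻¹ * ν S)) := by
              rw [ENNReal.mul_inv_cancel hC₀ ENNReal.ofReal_ne_top, one_mul]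
          _ = _ := by ring
    _ ≤ C * (ENNReal.ofReal t ^ p / (C * ν S ^ (β / D)) * ν W) := by gcongr
    _ ≤ C * ∫⁻ η, (‖f ξ - f η‖₊ : ℝ≥0∞) ^ p / edist ξ η ^ β ∂ν := by
        rw [← hρ]
        gcongr
        exact le_lintegral_rpow_div_edist_rpow hW hp hβ hgap hWd

theorem tsum_indicator_zpow_mul_dyadicShell_le (hlow : IsLowerAhlforsRegular ν c D)
    (hf : Measurable f) (hc : 0 < c) (hD : 0 < D)
    (hp : 0 ≤ p) (hβ : 0 ≤ β) (hfin : ∀ k, dyadicLevel ν f k ≠ ∞) :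
    ∑' j, {j | ν univ < 2 * dyadicLevel ν f j}ᶜ.indicator (fun j => ((2 : ℝ≥0∞) ^ p) ^ j *
        (dyadicLevel ν f j ^ (1 - β / D) * ν (dyadicShell f (j + 1)))) j ≤
      ENNReal.ofReal ((2 * c) ^ (β / D)) * gagliardoEnergy ν f p β := by
  set C := ENNReal.ofReal ((2 * c) ^ (β / D))
  set F := fun ξ => ∫⁻ η, (‖f ξ - f η‖₊ : ℝ≥0∞) ^ p / edist ξ η ^ β ∂ν
  have hterm (j : ℤ) : {j | ν univ < 2 * dyadicLevel ν f j}ᶜ.indicator (fun j =>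
      ((2 : ℝ≥0∞) ^ p) ^ j * (dyadicLevel ν f j ^ (1 - β / D) * ν (dyadicShell f (j + 1)))) j ≤
      C * ∫⁻ ξ in dyadicShell f (j + 1), F ξ ∂ν := by
    by_cases hj : j ∈ {j | ν univ < 2 * dyadicLevel ν f j}ᶜ
    swap
    · rw [indicator_of_notMem hj]
      exact zero_le
    rw [indicator_of_mem hj]
    rcases eq_or_ne (dyadicLevel ν f j) 0 with h₀ | h₀
    · rw [measure_mono_null (dyadicShell_subset_norm_gt j) h₀, mul_zero, mul_zero]
      exact zero_le
    calc _ = ∫⁻ _ in dyadicShell f (j + 1),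
          ENNReal.ofReal ((2 : ℝ) ^ j) ^ p * dyadicLevel ν f j ^ (1 - β / D) ∂ν := by
          rw [setLIntegral_const, ENNReal.two_rpow_zpow]
          ring
      _ ≤ ∫⁻ ξ in dyadicShell f (j + 1), C * F ξ ∂ν :=
          setLIntegral_mono' (measurableSet_dyadicShell hf _) fun ξ hξ =>
            ofReal_rpow_mul_measure_rpow_le_lintegral hlow hf hc hD hp hβ
              (by rw [mul_comm, ← zpow_add_one₀ two_ne_zero]; exact hξ.1) h₀ (hfin j) (not_lt.1 hj)
      _ = C * ∫⁻ ξ in dyadicShell f (j + 1), F ξ ∂ν :=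
          lintegral_const_mul' _ _ ENNReal.ofReal_ne_top
  calc _ ≤ ∑' j, C * ∫⁻ ξ in dyadicShell f (j + 1), F ξ ∂ν := ENNReal.tsum_le_tsum hterm
    _ = C * ∫⁻ ξ in ⋃ j, dyadicShell f (j + 1), F ξ ∂ν := by
        rw [ENNReal.tsum_mul_left, lintegral_iUnion (s := fun j : ℤ => dyadicShell f (j + 1))
          (fun j => measurableSet_dyadicShell hf _)
          fun i j hij => pairwise_disjoint_dyadicShell f (by omega)]
    _ ≤ C * gagliardoEnergy ν f p β := by
        gcongr
        exact setLIntegral_le_lintegral _ _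

theorem tsum_indicator_zpow_mul_dyadicLevel_le (hlow : IsLowerAhlforsRegular ν c D)
    (hf : Measurable f) (hc : 0 < c) (hD : 0 < D) (hp : 0 ≤ p) (hDβ : D ≤ β)
    (hfin : ∀ k, dyadicLevel ν f k ≠ ∞) :
    ∑' k, {k | ν univ < 2 * dyadicLevel ν f k}ᶜ.indicator (fun k => ((2 : ℝ≥0∞) ^ p) ^ k *
        (dyadicLevel ν f (k + 1) * dyadicLevel ν f k ^ (1 - β / D))) k ≤
      (1 - ((2 : ℝ≥0∞) ^ p)⁻¹)⁻¹ *
        (ENNReal.ofReal ((2 * c) ^ (β / D)) * gagliardoEnergy ν f p β) := by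
  have ha := antitone_dyadicLevel ν f
  have hdecomp (k : ℤ) :
      dyadicLevel ν f (k + 1) = ∑' n : ℕ, ν (dyadicShell f (k + n + 1)) := by
    simp only [dyadicLevel_eq_tsum hf, add_right_comm]
  have hβD : 1 - β / D ≤ 0 := by rw [sub_nonpos, one_le_div hD]; exact hDβ
  simp only [hdecomp]
  refine (tsum_indicator_zpow_mul_tsum_le (m := fun j => ν (dyadicShell f (j + 1)))
    (b := fun k => dyadicLevel ν f k ^ (1 - β / D)) (by simp)
    (ENNReal.rpow_ne_top_of_nonneg hp ENNReal.ofNat_ne_top) ?_ ?_).trans ?_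
  · exact fun j k hjk (hj : ¬ ν univ < 2 * dyadicLevel ν f j) =>
      not_lt.2 ((mul_le_mul' le_rfl (ha hjk)).trans (not_lt.1 hj))
  · exact fun j k hjk => ENNReal.rpow_le_rpow_of_nonpos hβD (ha hjk)
  · gcongr
    exact tsum_indicator_zpow_mul_dyadicShell_le hlow hf hc hD hp (hD.le.trans hDβ) hfin

theorem lintegral_rpow_mul_measure_norm_gt_rpow_le (hlow : IsLowerAhlforsRegular ν c D)
    (hf : Measurable f) (hsupp : ν (Function.support f) ≠ ∞) (hc : 0 < c) (hD : 0 < D)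
    {θ : ℝ} (hp : 1 ≤ p) (hθ₀ : 0 < θ) (hθ₁ : θ < 1) (hβ : β / D = 2 - θ) :
    ∫⁻ t in Ioi 0, ENNReal.ofReal (t ^ (p - 1)) * ν {ξ | t < ‖f ξ‖} ^ θ ≤
      2 ^ (p - 1) * (2 ^ p) ^ θ⁻¹ * (1 - (2 ^ p)⁻¹)⁻¹ * (4 + ENNReal.ofReal ((2 * c) ^ (β / D))) *
        (ν univ ^ (θ - 1) * ∫⁻ ξ, (‖f ξ‖₊ : ℝ≥0∞) ^ p ∂ν + gagliardoEnergy ν f p β) := by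
  set R : ℝ≥0∞ := 2 ^ p
  set a := dyadicLevel ν f
  set T := fun k => R ^ k * (a (k + 1) * a k ^ (θ - 1))
  set H := {k | ν univ < 2 * a k}
  have hR : 1 < R := ENNReal.one_lt_rpow (by norm_num) (by linarith)
  have hR' : R ≠ ∞ := ENNReal.rpow_ne_top_of_nonneg (by linarith) ENNReal.ofNat_ne_top
  have ha : Antitone a := antitone_dyadicLevel ν f
  have hfin (k : ℤ) : a k ≠ ∞ := ne_top_of_le_ne_top hsupp (dyadicLevel_le_measure_support k)
  have hlarge : ∑' k, H.indicator T k ≤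
      4 * (1 - R⁻¹)⁻¹ * (ν univ ^ (θ - 1) * ∫⁻ ξ, (‖f ξ‖₊ : ℝ≥0∞) ^ p ∂ν) :=
    tsum_indicator_zpow_mul_rpow_le_of_tendsto hR hR' hθ₀.le hθ₁.le
      (fun k => measure_mono (subset_univ _)) (tendsto_dyadicLevel_atTop hf (hfin 0)) fun k => by
        rw [ENNReal.two_rpow_zpow]
        exact ofReal_rpow_mul_measure_norm_gt_le hf _ (by linarith)
  have hsmall : ∑' k, Hᶜ.indicator T k ≤
      (1 - R⁻¹)⁻¹ * (ENNReal.ofReal ((2 * c) ^ (β / D)) * gagliardoEnergy ν f p β) := by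
    simp only [T, show θ - 1 = 1 - β / D by linarith]
    exact tsum_indicator_zpow_mul_dyadicLevel_le hlow hf hc hD (by linarith)
      (by rw [← one_le_div hD]; linarith) hfin
  calc ∫⁻ t in Ioi 0, ENNReal.ofReal (t ^ (p - 1)) * ν {ξ | t < ‖f ξ‖} ^ θ
      ≤ 2 ^ (p - 1) * ∑' k, R ^ k * a k ^ θ :=
        lintegral_Ioi_rpow_mul_le_tsum
          (fun s t hst => ENNReal.rpow_le_rpow (antitone_measure_norm_gt ν f hst) hθ₀.le) hp
    _ ≤ 2 ^ (p - 1) * (R ^ θ⁻¹ * (∑' k, H.indicator T k + ∑' k, Hᶜ.indicator T k)) := by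
        rw [← ENNReal.tsum_add]
        simp only [indicator_self_add_compl_apply]
        gcongr
        exact tsum_zpow_mul_rpow_le hR hR' hθ₀ hθ₁ ha hsupp dyadicLevel_le_measure_support
    _ ≤ 2 ^ (p - 1) * R ^ θ⁻¹ * (1 - R⁻¹)⁻¹ * ((4 + ENNReal.ofReal ((2 * c) ^ (β / D))) *
          (ν univ ^ (θ - 1) * ∫⁻ ξ, (‖f ξ‖₊ : ℝ≥0∞) ^ p ∂ν + gagliardoEnergy ν f p β)) := by
        grw [hlarge, hsmall, ← ENNReal.mul_add_mul_le_add_mul_add]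
        apply le_of_eq
        ring
    _ = _ := by ring

end FractionalEnergy

theorem fractional_sobolev_inequality_lorentz_general
    {Z : Type*} [MetricSpace Z] [MeasurableSpace Z] [BorelSpace Z]
    (hperf : ∀ z : Z, (nhdsWithin z {z}ᶜ).NeBot)
    (ν : Measure Z) (D c : ℝ) (hD : 0 < D) (hc : 1 ≤ c)
    (hA : ∀ (z : Z) (r : ℝ), 0 < r → ENNReal.ofReal r < EMetric.diam (Set.univ : Set Z) →
      ENNReal.ofReal (c⁻¹ * r ^ D) ≤ ν (Metric.ball z r) ∧
        ν (Metric.ball z r) ≤ ENNReal.ofReal (c * r ^ D))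
    (s p : ℝ) (hs : 0 < s) (hp : 1 ≤ p) (hsp : s * p < D) :
    ∃ C : ℝ, 0 < C ∧
      ∀ f : Z → ℂ, Measurable f → HasCompactSupport f →
        ENNReal.ofReal (p * D / (D - s * p)) *
            ∫⁻ t in Set.Ioi (0 : ℝ),
              ENNReal.ofReal (t ^ (p - 1)) *
                (ν {ξ | t < ‖f ξ‖}) ^ (p / (p * D / (D - s * p))) ≤
          ENNReal.ofReal C *
            ((ν Set.univ) ^ (-(s * p) / D) * (∫⁻ ξ, (‖f ξ‖₊ : ℝ≥0∞) ^ p ∂ν) +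
              ∫⁻ ξ, ∫⁻ η, (‖f ξ - f η‖₊ : ℝ≥0∞) ^ p / (edist ξ η) ^ (D + s * p) ∂ν ∂ν) := by
  have hsp₀ : 0 < s * p := mul_pos hs (by linarith)
  set θ := (D - s * p) / D with hθ
  have hθ₀ : 0 < θ := div_pos (by linarith) hD
  have hθ₁ : θ < 1 := (div_lt_one hD).2 (by linarith)
  have hβ : (D + s * p) / D = 2 - θ := by rw [hθ]; field_simp; ring
  have : IsLocallyFiniteMeasure ν :=
    isLocallyFiniteMeasure_of_isUpperAhlforsRegular hperf fun z r hr hrd => (hA z r hr hrd).2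
  set K₀ : ℝ≥0∞ := 2 ^ (p - 1) * (2 ^ p) ^ θ⁻¹ * (1 - (2 ^ p)⁻¹)⁻¹ *
    (4 + ENNReal.ofReal ((2 * c) ^ ((D + s * p) / D)))
  have hK₀ : K₀ ≠ ∞ := by
    have := ENNReal.inv_one_sub_inv_ne_top
      (ENNReal.one_lt_rpow (by norm_num : (1 : ℝ≥0∞) < 2) (by linarith : 0 < p))
    finiteness
  set K := ENNReal.ofReal (p * D / (D - s * p)) * K₀
  refine ⟨K.toReal + 1, by positivity, fun f hf hfc => ?_⟩
  have hsupp : ν (Function.support f) ≠ ∞ :=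
    ((measure_mono (subset_tsupport f)).trans_lt (IsCompact.measure_lt_top hfc)).ne
  rw [show p / (p * D / (D - s * p)) = θ by rw [hθ]; field_simp,
    show -(s * p) / D = θ - 1 by rw [hθ]; field_simp; ring]
  calc _ ≤ ENNReal.ofReal (p * D / (D - s * p)) * (K₀ * ((ν univ) ^ (θ - 1) *
          ∫⁻ ξ, (‖f ξ‖₊ : ℝ≥0∞) ^ p ∂ν + gagliardoEnergy ν f p (D + s * p))) := by
        gcongr
        exact lintegral_rpow_mul_measure_norm_gt_rpow_le (fun z r hr hrd => (hA z r hr hrd).1)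
          hf hsupp (by linarith) hD hp hθ₀ hθ₁ hβ
    _ ≤ ENNReal.ofReal (K.toReal + 1) * ((ν univ) ^ (θ - 1) *
          ∫⁻ ξ, (‖f ξ‖₊ : ℝ≥0∞) ^ p ∂ν + gagliardoEnergy ν f p (D + s * p)) := by
        rw [← mul_assoc]
        gcongr
        rw [← ENNReal.ofReal_toReal (ENNReal.mul_ne_top ENNReal.ofReal_ne_top hK₀)]
        exact ENNReal.ofReal_le_ofReal (by simp [K])

/-- **Fractional Sobolev inequality (Lorentz form).**
Let `(Z,d,ν)` be an Ahlfors `D`-regular metric measure space with constant `c ≥ 1`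
(`Z` bounded or unbounded), let `s ∈ (0,∞)` and `p ∈ [1,∞)` with `s·p < D`, and set
`p* = p·D/(D − s·p)`. Then there is `C > 0`, depending only on `c, D, s, p`, such that
for every compactly supported measurable `f : Z → ℂ`,
`p* · ∫₀^∞ t^{p−1} ν({|f| > t})^{p/p*} dt ≤ C·(ν(Z)^{−sp/D}·∫|f|^p + ∬ |f(ξ)−f(η)|^p/d(ξ,η)^{D+sp})`,
all in `ℝ≥0∞` (note `∞ ^ (negative) = 0` in `ℝ≥0∞`, so `ν(Z)^{−sp/D} = 0` when `ν Z = ∞`). -/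
theorem fractional_sobolev_inequality_lorentz
    {Z : Type*} [MetricSpace Z] [CompleteSpace Z] [MeasurableSpace Z] [BorelSpace Z]
    (hperf : ∀ z : Z, (nhdsWithin z {z}ᶜ).NeBot)
    (ν : Measure Z) (D c : ℝ) (hD : 0 < D) (hc : 1 ≤ c)
    (hA : ∀ (z : Z) (r : ℝ), 0 < r → ENNReal.ofReal r < EMetric.diam (Set.univ : Set Z) →
      ENNReal.ofReal (c⁻¹ * r ^ D) ≤ ν (Metric.ball z r) ∧
        ν (Metric.ball z r) ≤ ENNReal.ofReal (c * r ^ D))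
    (s p : ℝ) (hs : 0 < s) (hp : 1 ≤ p) (hsp : s * p < D) :
    ∃ C : ℝ, 0 < C ∧
      ∀ f : Z → ℂ, Measurable f → HasCompactSupport f →
        ENNReal.ofReal (p * D / (D - s * p)) *
            ∫⁻ t in Set.Ioi (0 : ℝ),
              ENNReal.ofReal (t ^ (p - 1)) *
                (ν {ξ | t < ‖f ξ‖}) ^ (p / (p * D / (D - s * p))) ≤
          ENNReal.ofReal C *
            ((ν Set.univ) ^ (-(s * p) / D) * (∫⁻ ξ, (‖f ξ‖₊ : ℝ≥0∞) ^ p ∂ν) +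
              ∫⁻ ξ, ∫⁻ η, (‖f ξ - f η‖₊ : ℝ≥0∞) ^ p / (edist ξ η) ^ (D + s * p) ∂ν ∂ν) :=
  fractional_sobolev_inequality_lorentz_general hperf ν D c hD hc hA s p hs hp hsp
end

section
/- Let (Z,d,ν) be an Ahlfors D-regular metric measure space with constant c ≥ 1, let s ∈ (0,1) and p ∈ [1,∞) satisfy s·p < D, and let f : Z → ℂ be a bounded measurable function with compact support. For k ∈ ℤ set A_k = {ξ ∈ Z : |f(ξ)| > 2^k} and a_k = ν(A_k). Then there is a constant C > 0, depending only on c, D, s and p, such that Σ_{k ∈ ℤ, a_k ≠ 0} 2^{k·p} · a_{k+1} · a_k^{−s·p/D} ≤ C · ( ∬_{Z×Z} |f(ξ)−f(η)|^p / d(ξ,η)^{D+s·p} dν(ξ)dν(η) + ν(Z)^{−s·p/D} · ∫_Z |f|^p dν ). -/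
/-!
Fix `k` with `a_k ≠ 0`. If `A_k` fills at least half of `Z`, then
`a_k ^ (-sp/D) ≤ 2 ^ (sp/D) ν(Z) ^ (-sp/D)`, and `Σ_k 2^{kp} a_{k+1} ≤ ∫ |f|^p` is a dyadic
layer-cake bound. Otherwise let `ρ_k` be the radius with `c⁻¹ ρ_k^D = 2 a_k`: by the lower Ahlfors
bound (or because the ball is all of `Z`), every closed ball of radius `ρ_k` meets `Z \ A_k` in
measure at least `a_k`. For `ξ ∈ A_{k+1}` and `η` in that part of the ball, `|f ξ - f η| > 2^k`
and `d(ξ, η) ≤ ρ_k`, so these pairs carry Gagliardo energy at least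
`2^{kp} ρ_k^{-(D+sp)} a_k a_{k+1} = (2c)^{-(D+sp)/D} 2^{kp} a_{k+1} a_k^{-sp/D}`.
For a fixed pair the levels `k` involved satisfy `2^k < |f ξ - f η|`, so summing over `k` costs
only the geometric factor `Σ_{2^k < N} 2^{kp} ≤ 2 N^p`.
-/

open MeasureTheory Metric Filter Set
open scoped ENNReal NNReal Topology Classical

theorem ENNReal.ofReal_norm_rpow {E : Type*} [SeminormedAddGroup E] (x : E) {p : ℝ} (hp : 0 ≤ p) :
    ENNReal.ofReal (‖x‖ ^ p) = (‖x‖₊ : ℝ≥0∞) ^ p := by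
  rw [← ENNReal.ofReal_rpow_of_nonneg (norm_nonneg x) hp, ofReal_norm]
  rfl

theorem ENNReal.tsum_lintegral_le_lintegral_tsum {α ι : Type*} [MeasurableSpace α] (μ : Measure α)
    (g : ι → α → ℝ≥0∞) : ∑' i, ∫⁻ x, g i x ∂μ ≤ ∫⁻ x, ∑' i, g i x ∂μ := by
  rw [ENNReal.tsum_eq_iSup_sum]
  refine iSup_le fun F => ?_
  calc ∑ i ∈ F, ∫⁻ x, g i x ∂μ ≤ ∫⁻ x, ∑ i ∈ F, g i x ∂μ := by
        induction F using Finset.induction_on with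
        | empty => simp
        | insert i F hi ih =>
          simp only [Finset.sum_insert hi]
          exact (add_le_add le_rfl ih).trans (le_lintegral_add _ _)
    _ ≤ ∫⁻ x, ∑' i, g i x ∂μ := lintegral_mono fun x => ENNReal.sum_le_tsum F

theorem ENNReal.rpow_neg_le_two_rpow_mul {x y : ℝ≥0∞} {t : ℝ} (hy : y ≠ 0) (ht : 0 ≤ t)
    (h : x ≤ 2 * y) : y ^ (-t) ≤ 2 ^ t * x ^ (-t) :=
  calc y ^ (-t) = 2 ^ t * (2 * y) ^ (-t) := by
        rw [ENNReal.mul_rpow_of_ne_zero two_ne_zero hy, ← mul_assoc,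
          ← ENNReal.rpow_add _ _ two_ne_zero ENNReal.ofNat_ne_top, add_neg_cancel,
          ENNReal.rpow_zero, one_mul]
    _ ≤ 2 ^ t * x ^ (-t) := by
        rw [ENNReal.rpow_neg, ENNReal.rpow_neg]
        gcongr

theorem tsum_ite_two_zpow_lt_le {p : ℝ} (hp : 1 ≤ p) (N : ℝ) :
    ∑' k : ℤ, (if (2 : ℝ) ^ k < N then ENNReal.ofReal (2 ^ ((k : ℝ) * p)) else 0) ≤
      ENNReal.ofReal (2 * N ^ p) := by
  rcases le_or_gt N 0 with hN | hN
  · have hlt (k : ℤ) : ¬ (2 : ℝ) ^ k < N := fun h => (h.trans_le hN).not_ge (zpow_pos two_pos k).le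
    simp [hlt]
  set K : ℤ := ⌊Real.logb 2 N⌋
  have hK (k : ℤ) (hk : (2 : ℝ) ^ k < N) : k ≤ K :=
    Int.le_floor.2 ((Real.lt_logb_iff_rpow_lt one_lt_two hN).2 (by rwa [Real.rpow_intCast])).le
  have h2K : (2 : ℝ) ^ (K : ℝ) ≤ N :=
    calc (2 : ℝ) ^ (K : ℝ) ≤ 2 ^ Real.logb 2 N :=
          Real.rpow_le_rpow_of_exponent_le one_le_two (Int.floor_le _)
      _ = N := Real.rpow_logb two_pos (by norm_num) hN
  -- only `k ≤ K` contribute; writing `k = K - j` turns the sum into a geometric series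
  have hsupp : Function.support (fun k : ℤ =>
      if (2 : ℝ) ^ k < N then ENNReal.ofReal (2 ^ ((k : ℝ) * p)) else 0) ⊆
        range (fun j : ℕ => K - j) := by
    intro k hk
    have := hK k (by by_contra h; simp [h] at hk)
    exact ⟨(K - k).toNat, by simp only; omega⟩
  have hinj : Function.Injective (fun j : ℕ => K - j) := fun i j h => by simpa using h
  rw [← hinj.tsum_eq hsupp]
  have hterm (j : ℕ) : (2 : ℝ) ^ (((K - j : ℤ) : ℝ) * p) ≤ N ^ p * 2⁻¹ ^ j :=
    calc (2 : ℝ) ^ (((K - j : ℤ) : ℝ) * p) = (2 ^ (K : ℝ)) ^ p * (2 ^ (-p)) ^ j := by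
          rw [← Real.rpow_mul two_pos.le, ← Real.rpow_natCast, ← Real.rpow_mul two_pos.le,
            ← Real.rpow_add two_pos]
          push_cast
          ring_nf
      _ ≤ N ^ p * 2⁻¹ ^ j := by
          gcongr
          calc (2 : ℝ) ^ (-p) ≤ 2 ^ (-1 : ℝ) :=
                Real.rpow_le_rpow_of_exponent_le one_le_two (by linarith)
            _ = 2⁻¹ := Real.rpow_neg_one 2
  calc ∑' j : ℕ, (if (2 : ℝ) ^ (K - j) < N then ENNReal.ofReal (2 ^ (((K - j : ℤ) : ℝ) * p)) else 0)
      ≤ ∑' j : ℕ, ENNReal.ofReal (N ^ p) * 2⁻¹ ^ j := by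
        refine ENNReal.tsum_le_tsum fun j => ?_
        split_ifs
        · rw [← ENNReal.ofReal_ofNat 2, ← ENNReal.ofReal_inv_of_pos two_pos,
            ← ENNReal.ofReal_pow (by norm_num), ← ENNReal.ofReal_mul (by positivity)]
          exact ENNReal.ofReal_le_ofReal (hterm j)
        · exact zero_le
    _ = ENNReal.ofReal (2 * N ^ p) := by
        rw [ENNReal.tsum_mul_left, ENNReal.tsum_geometric, ENNReal.one_sub_inv_two, inv_inv,
          ENNReal.ofReal_mul zero_le_two, ENNReal.ofReal_ofNat, mul_comm]

theorem tsum_two_rpow_mul_measure_lt_le_lintegral {α E : Type*} [MeasurableSpace α]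
    [NormedAddCommGroup E] [MeasurableSpace E] [OpensMeasurableSpace E] (μ : Measure α)
    {f : α → E} (hf : Measurable f) {p : ℝ} (hp : 1 ≤ p) :
    ∑' k : ℤ, ENNReal.ofReal (2 ^ ((k : ℝ) * p)) * μ {x | (2 : ℝ) ^ (k + 1) < ‖f x‖} ≤
      ∫⁻ x, (‖f x‖₊ : ℝ≥0∞) ^ p ∂μ := by
  have hpoint (x : α) : ∑' k : ℤ, {y | (2 : ℝ) ^ (k + 1) < ‖f y‖}.indicator
      (fun _ => ENNReal.ofReal (2 ^ ((k : ℝ) * p))) x ≤ (‖f x‖₊ : ℝ≥0∞) ^ p :=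
    calc _ = ∑' k : ℤ,
          (if (2 : ℝ) ^ k < ‖f x‖ / 2 then ENNReal.ofReal (2 ^ ((k : ℝ) * p)) else 0) := by
          refine tsum_congr fun k => ?_
          simp [indicator_apply, zpow_add_one₀, lt_div_iff₀]
      _ ≤ ENNReal.ofReal (2 * (‖f x‖ / 2) ^ p) := tsum_ite_two_zpow_lt_le hp _
      _ ≤ ENNReal.ofReal (‖f x‖ ^ p) := by
          refine ENNReal.ofReal_le_ofReal ?_
          have h2p : 2 ≤ (2 : ℝ) ^ p := by
            simpa using Real.rpow_le_rpow_of_exponent_le one_le_two hp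
          rw [Real.div_rpow (norm_nonneg _) zero_le_two, mul_div_assoc',
            div_le_iff₀ (by positivity)]
          nlinarith [Real.rpow_nonneg (norm_nonneg (f x)) p]
      _ = _ := ENNReal.ofReal_norm_rpow _ (by linarith)
  calc ∑' k : ℤ, ENNReal.ofReal (2 ^ ((k : ℝ) * p)) * μ {x | (2 : ℝ) ^ (k + 1) < ‖f x‖}
      = ∑' k : ℤ, ∫⁻ x, {y | (2 : ℝ) ^ (k + 1) < ‖f y‖}.indicator
          (fun _ => ENNReal.ofReal (2 ^ ((k : ℝ) * p))) x ∂μ := by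
        simp only [lintegral_indicator_const (measurableSet_lt measurable_const hf.norm)]
    _ ≤ ∫⁻ x, ∑' k : ℤ, {y | (2 : ℝ) ^ (k + 1) < ‖f y‖}.indicator
          (fun _ => ENNReal.ofReal (2 ^ ((k : ℝ) * p))) x ∂μ :=
        ENNReal.tsum_lintegral_le_lintegral_tsum μ _
    _ ≤ _ := lintegral_mono hpoint

theorem measure_le_measure_diff_of_two_mul_le {α : Type*} [MeasurableSpace α] {μ : Measure α}
    {A B : Set α} (hA : μ A ≠ ∞) (h : 2 * μ A ≤ μ B) : μ A ≤ μ (B \ A) :=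
  calc μ A = 2 * μ A - μ A := by rw [two_mul, ENNReal.add_sub_cancel_right hA]
    _ ≤ μ B - μ A := tsub_le_tsub_right h _
    _ ≤ μ (B \ A) := le_measure_sdiff

/-- The radius at which the Ahlfors lower bound `c⁻¹ r ^ D` equals `2 a`. -/
noncomputable def ahlforsRadius (c D : ℝ) (a : ℝ≥0∞) : ℝ := (2 * c * a.toReal) ^ (1 / D)

section Ahlfors

variable {Z : Type*} [MetricSpace Z] [MeasurableSpace Z] {ν : Measure Z} {c D : ℝ}

theorem two_mul_le_measure_closedBall_ahlforsRadius (hc : 0 < c) (hD : 0 < D)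
    (hlow : ∀ (z : Z) (r : ℝ), 0 < r → ENNReal.ofReal r < ediam (univ : Set Z) →
      ENNReal.ofReal (c⁻¹ * r ^ D) ≤ ν (ball z r))
    {a : ℝ≥0∞} (ha₀ : a ≠ 0) (ha : a ≠ ∞) (huniv : 2 * a ≤ ν univ) (z : Z) :
    2 * a ≤ ν (closedBall z (ahlforsRadius c D a)) := by
  set r := ahlforsRadius c D a
  have hr : 0 < r := Real.rpow_pos_of_pos (by have := ENNReal.toReal_pos ha₀ ha; positivity) _
  rcases lt_or_ge (ENNReal.ofReal r) (ediam (univ : Set Z)) with hdiam | hdiam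
  · have hrD : c⁻¹ * r ^ D = 2 * a.toReal := by
      simp only [r, ahlforsRadius]
      rw [← Real.rpow_mul (by positivity), one_div_mul_cancel hD.ne', Real.rpow_one]
      field_simp
    calc 2 * a = ENNReal.ofReal (c⁻¹ * r ^ D) := by
          rw [hrD, ENNReal.ofReal_mul zero_le_two, ENNReal.ofReal_toReal ha, ENNReal.ofReal_ofNat]
      _ ≤ ν (ball z r) := hlow z r hr hdiam
      _ ≤ ν (closedBall z r) := measure_mono ball_subset_closedBall
  · have hball : closedBall z r = univ := eq_univ_of_forall fun y =>
      mem_closedBall_comm.1 <| (edist_le_ofReal hr.le).1 <|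
        (edist_le_ediam_of_mem (mem_univ z) (mem_univ y)).trans hdiam
    rwa [hball]

theorem rpow_neg_div_eq_mul_ahlforsRadius (hc : 0 < c) (hD : 0 < D) (t : ℝ) {a : ℝ≥0∞}
    (ha₀ : a ≠ 0) (ha : a ≠ ∞) :
    a ^ (-t / D) =
      ENNReal.ofReal (2 * c) ^ ((D + t) / D) *
        (ENNReal.ofReal (ahlforsRadius c D a) ^ (-(D + t)) * a) := by
  set b := ENNReal.ofReal (2 * c)
  have hb : b ≠ 0 := by simpa [b] using hc
  have hρ : ENNReal.ofReal (ahlforsRadius c D a) = (b * a) ^ (1 / D) := by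
    rw [ahlforsRadius, ← ENNReal.ofReal_rpow_of_nonneg (by positivity) (by positivity),
      ENNReal.ofReal_mul (by positivity : (0 : ℝ) ≤ 2 * c), ENNReal.ofReal_toReal ha]
  calc a ^ (-t / D) = a ^ (-((D + t) / D) + 1) := by congr 1; field_simp; ring
    _ = b ^ ((D + t) / D) * b ^ (-((D + t) / D)) * (a ^ (-((D + t) / D)) * a) := by
        rw [← ENNReal.rpow_add _ _ hb ENNReal.ofReal_ne_top, add_neg_cancel, ENNReal.rpow_zero,
          one_mul, ENNReal.rpow_add _ _ ha₀ ha, ENNReal.rpow_one]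
    _ = b ^ ((D + t) / D) * (ENNReal.ofReal (ahlforsRadius c D a) ^ (-(D + t)) * a) := by
        rw [hρ, ← ENNReal.rpow_mul, ENNReal.mul_rpow_of_ne_zero hb ha₀,
          show 1 / D * -(D + t) = -((D + t) / D) by ring]
        ring

end Ahlfors

section Kernel

variable {Z : Type*} [MetricSpace Z] [MeasurableSpace Z] (ν : Measure Z)

noncomputable def ballKernel (A B : Set Z) (ρ : ℝ) (w : ℝ≥0∞) (ξ η : Z) : ℝ≥0∞ :=
  if ξ ∈ B ∧ η ∈ closedBall ξ ρ \ A then w else 0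

theorem mul_mul_le_lintegral_lintegral_ballKernel [OpensMeasurableSpace Z] {A B : Set Z}
    (hA : MeasurableSet A) (hB : MeasurableSet B) {ρ : ℝ}
    (hball : ∀ ξ, ν A ≤ ν (closedBall ξ ρ \ A)) (w : ℝ≥0∞) :
    w * ν A * ν B ≤ ∫⁻ ξ, ∫⁻ η, ballKernel A B ρ w ξ η ∂ν ∂ν := by
  rw [← lintegral_indicator_const hB]
  refine lintegral_mono fun ξ => ?_
  by_cases hξ : ξ ∈ B
  · have hslice : ballKernel A B ρ w ξ = (closedBall ξ ρ \ A).indicator fun _ => w := by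
      ext η
      simp [ballKernel, indicator_apply, hξ]
    rw [indicator_of_mem hξ, hslice, lintegral_indicator_const (measurableSet_closedBall.diff hA)]
    gcongr w * ?_
    exact hball ξ
  · simp [hξ]

variable {E : Type*} [NormedAddCommGroup E] (f : Z → E) (c D p t : ℝ)

def dyadicSuperlevel (k : ℤ) : Set Z := {ξ | (2 : ℝ) ^ k < ‖f ξ‖}

noncomputable def dyadicRadius (k : ℤ) : ℝ := ahlforsRadius c D (ν (dyadicSuperlevel f k))

noncomputable def dyadicKernel (k : ℤ) : Z → Z → ℝ≥0∞ :=
  ballKernel (dyadicSuperlevel f k) (dyadicSuperlevel f (k + 1)) (dyadicRadius ν f c D k)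
    (ENNReal.ofReal (2 ^ ((k : ℝ) * p)) * ENNReal.ofReal (dyadicRadius ν f c D k) ^ (-(D + t)))

variable {ν f c D p t}

theorem dyadicKernel_le (hDt : 0 ≤ D + t) (k : ℤ) (ξ η : Z) :
    dyadicKernel ν f c D p t k ξ η ≤
      (if (2 : ℝ) ^ k < ‖f ξ - f η‖ then ENNReal.ofReal (2 ^ ((k : ℝ) * p)) else 0) *
        edist ξ η ^ (-(D + t)) := by
  unfold dyadicKernel ballKernel
  split_ifs with hmem hlt
  · obtain ⟨-, hη, -⟩ := hmem
    have hdist : edist ξ η ≤ ENNReal.ofReal (dyadicRadius ν f c D k) :=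
      (edist_le_ofReal (dist_nonneg.trans hη)).2 (mem_closedBall_comm.1 hη)
    rw [ENNReal.rpow_neg, ENNReal.rpow_neg]
    gcongr
  · obtain ⟨hξ, -, hηk⟩ := hmem
    have hξ' : 2 ^ k * 2 < ‖f ξ‖ := by rwa [← zpow_add_one₀ two_ne_zero]
    have hη' : ‖f η‖ ≤ 2 ^ k := not_lt.1 hηk
    exact absurd (by linarith [norm_sub_norm_le (f ξ) (f η)]) hlt
  · exact zero_le
  · exact zero_le

theorem tsum_dyadicKernel_le (hp : 1 ≤ p) (hDt : 0 ≤ D + t) (ξ η : Z) :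
    ∑' k : ℤ, dyadicKernel ν f c D p t k ξ η ≤
      2 * ((‖f ξ - f η‖₊ : ℝ≥0∞) ^ p / edist ξ η ^ (D + t)) :=
  calc ∑' k : ℤ, dyadicKernel ν f c D p t k ξ η
      ≤ ∑' k : ℤ, (if (2 : ℝ) ^ k < ‖f ξ - f η‖ then ENNReal.ofReal (2 ^ ((k : ℝ) * p)) else 0) *
          edist ξ η ^ (-(D + t)) := ENNReal.tsum_le_tsum (dyadicKernel_le hDt · ξ η)
    _ = (∑' k : ℤ, if (2 : ℝ) ^ k < ‖f ξ - f η‖ then ENNReal.ofReal (2 ^ ((k : ℝ) * p)) else 0) *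
          edist ξ η ^ (-(D + t)) := ENNReal.tsum_mul_right
    _ ≤ ENNReal.ofReal (2 * ‖f ξ - f η‖ ^ p) * edist ξ η ^ (-(D + t)) := by
        gcongr
        exact tsum_ite_two_zpow_lt_le hp _
    _ = 2 * ((‖f ξ - f η‖₊ : ℝ≥0∞) ^ p / edist ξ η ^ (D + t)) := by
        rw [ENNReal.ofReal_mul zero_le_two, ENNReal.ofReal_norm_rpow _ (by linarith),
          ENNReal.ofReal_ofNat, ENNReal.rpow_neg, div_eq_mul_inv, mul_assoc]

theorem tsum_lintegral_lintegral_dyadicKernel_le (hp : 1 ≤ p) (hDt : 0 ≤ D + t) :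
    ∑' k : ℤ, ∫⁻ ξ, ∫⁻ η, dyadicKernel ν f c D p t k ξ η ∂ν ∂ν ≤
      2 * ∫⁻ ξ, ∫⁻ η, (‖f ξ - f η‖₊ : ℝ≥0∞) ^ p / edist ξ η ^ (D + t) ∂ν ∂ν :=
  calc ∑' k : ℤ, ∫⁻ ξ, ∫⁻ η, dyadicKernel ν f c D p t k ξ η ∂ν ∂ν
      ≤ ∫⁻ ξ, ∑' k : ℤ, ∫⁻ η, dyadicKernel ν f c D p t k ξ η ∂ν ∂ν :=
        ENNReal.tsum_lintegral_le_lintegral_tsum ν _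
    _ ≤ ∫⁻ ξ, ∫⁻ η, ∑' k : ℤ, dyadicKernel ν f c D p t k ξ η ∂ν ∂ν :=
        lintegral_mono fun ξ => ENNReal.tsum_lintegral_le_lintegral_tsum ν _
    _ ≤ ∫⁻ ξ, ∫⁻ η, 2 * ((‖f ξ - f η‖₊ : ℝ≥0∞) ^ p / edist ξ η ^ (D + t)) ∂ν ∂ν :=
        lintegral_mono fun ξ => lintegral_mono fun η => tsum_dyadicKernel_le hp hDt ξ η
    _ = 2 * ∫⁻ ξ, ∫⁻ η, (‖f ξ - f η‖₊ : ℝ≥0∞) ^ p / edist ξ η ^ (D + t) ∂ν ∂ν := by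
        simp_rw [lintegral_const_mul' 2 _ ENNReal.ofNat_ne_top]

theorem dyadic_term_le [OpensMeasurableSpace Z] [MeasurableSpace E] [OpensMeasurableSpace E]
    (hf : Measurable f) (hc : 0 < c) (hD : 0 < D) (ht : 0 ≤ t)
    (hlow : ∀ (z : Z) (r : ℝ), 0 < r → ENNReal.ofReal r < ediam (univ : Set Z) →
      ENNReal.ofReal (c⁻¹ * r ^ D) ≤ ν (ball z r)) (k : ℤ) :
    (if ν (dyadicSuperlevel f k) = 0 then 0 else
      ENNReal.ofReal (2 ^ ((k : ℝ) * p)) * ν (dyadicSuperlevel f (k + 1)) *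
        ν (dyadicSuperlevel f k) ^ (-t / D)) ≤
      2 ^ (t / D) * ν univ ^ (-t / D) *
          (ENNReal.ofReal (2 ^ ((k : ℝ) * p)) * ν (dyadicSuperlevel f (k + 1))) +
        ENNReal.ofReal (2 * c) ^ ((D + t) / D) *
          ∫⁻ ξ, ∫⁻ η, dyadicKernel ν f c D p t k ξ η ∂ν ∂ν := by
  split_ifs with h₀
  · exact zero_le
  have hmeas (j : ℤ) : MeasurableSet (dyadicSuperlevel f j) :=
    measurableSet_lt measurable_const hf.norm
  rcases le_or_gt (ν univ) (2 * ν (dyadicSuperlevel f k)) with hlarge | hsmall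
  · refine le_add_right ?_
    calc ENNReal.ofReal (2 ^ ((k : ℝ) * p)) * ν (dyadicSuperlevel f (k + 1)) *
          ν (dyadicSuperlevel f k) ^ (-t / D)
        ≤ ENNReal.ofReal (2 ^ ((k : ℝ) * p)) * ν (dyadicSuperlevel f (k + 1)) *
            (2 ^ (t / D) * ν univ ^ (-(t / D))) := by
          rw [neg_div]
          gcongr
          exact ENNReal.rpow_neg_le_two_rpow_mul h₀ (by positivity) hlarge
      _ = _ := by rw [neg_div]; ring
  · refine le_add_left ?_
    have hfin : ν (dyadicSuperlevel f k) ≠ ∞ := by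
      intro h
      simp [h] at hsmall
    have hball (ξ : Z) : ν (dyadicSuperlevel f k) ≤
        ν (closedBall ξ (dyadicRadius ν f c D k) \ dyadicSuperlevel f k) :=
      measure_le_measure_diff_of_two_mul_le hfin
        (two_mul_le_measure_closedBall_ahlforsRadius hc hD hlow h₀ hfin hsmall.le ξ)
    rw [rpow_neg_div_eq_mul_ahlforsRadius hc hD t h₀ hfin, ← dyadicRadius]
    calc _ = ENNReal.ofReal (2 * c) ^ ((D + t) / D) *
          (ENNReal.ofReal (2 ^ ((k : ℝ) * p)) *
              ENNReal.ofReal (dyadicRadius ν f c D k) ^ (-(D + t)) *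
            ν (dyadicSuperlevel f k) * ν (dyadicSuperlevel f (k + 1))) := by ring
      _ ≤ _ := by
        gcongr
        exact mul_mul_le_lintegral_lintegral_ballKernel ν (hmeas k) (hmeas (k + 1)) hball _

end Kernel

theorem discretized_sobolev_bound_general
    {Z : Type*} [MetricSpace Z] [MeasurableSpace Z] [BorelSpace Z]
    (ν : Measure Z) (D c : ℝ) (hD : 0 < D) (hc : 1 ≤ c)
    (hA : ∀ (z : Z) (r : ℝ), 0 < r → ENNReal.ofReal r < EMetric.diam (Set.univ : Set Z) →
      ENNReal.ofReal (c⁻¹ * r ^ D) ≤ ν (Metric.ball z r) ∧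
        ν (Metric.ball z r) ≤ ENNReal.ofReal (c * r ^ D))
    (s p : ℝ) (hs : 0 < s) (hp : 1 ≤ p) :
    ∃ C : ℝ, 0 < C ∧
      ∀ f : Z → ℂ, Measurable f → HasCompactSupport f → (∃ M : ℝ, ∀ ξ, ‖f ξ‖ ≤ M) →
        (∑' k : ℤ,
          if ν {ξ | (2 : ℝ) ^ k < ‖f ξ‖} = 0 then 0 else
            ENNReal.ofReal ((2 : ℝ) ^ ((k : ℝ) * p)) *
              ν {ξ | (2 : ℝ) ^ (k + 1) < ‖f ξ‖} *
              (ν {ξ | (2 : ℝ) ^ k < ‖f ξ‖}) ^ (-(s * p) / D)) ≤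
        ENNReal.ofReal C *
          ((∫⁻ ξ, ∫⁻ η, (‖f ξ - f η‖₊ : ℝ≥0∞) ^ p / (edist ξ η) ^ (D + s * p) ∂ν ∂ν) +
            (ν Set.univ) ^ (-(s * p) / D) * ∫⁻ ξ, (‖f ξ‖₊ : ℝ≥0∞) ^ p ∂ν) := by
  have hsp : 0 ≤ s * p := by positivity
  refine ⟨2 * (2 * c) ^ ((D + s * p) / D) + 2 ^ (s * p / D), by positivity, fun f hf _ _ => ?_⟩
  set I := ∫⁻ ξ, ∫⁻ η, (‖f ξ - f η‖₊ : ℝ≥0∞) ^ p / (edist ξ η) ^ (D + s * p) ∂ν ∂ν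
  set F := ∫⁻ ξ, (‖f ξ‖₊ : ℝ≥0∞) ^ p ∂ν
  set V := ν univ ^ (-(s * p) / D)
  set κ := ENNReal.ofReal (2 * c) ^ ((D + s * p) / D)
  calc _ ≤ 2 ^ (s * p / D) * V * ∑' k : ℤ,
          ENNReal.ofReal (2 ^ ((k : ℝ) * p)) * ν (dyadicSuperlevel f (k + 1)) +
        κ * ∑' k : ℤ, ∫⁻ ξ, ∫⁻ η, dyadicKernel ν f c D p (s * p) k ξ η ∂ν ∂ν := by
        rw [← ENNReal.tsum_mul_left, ← ENNReal.tsum_mul_left, ← ENNReal.tsum_add]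
        exact ENNReal.tsum_le_tsum fun k => dyadic_term_le hf (by linarith) hD hsp
          (fun z r hr hdiam => (hA z r hr hdiam).1) k
    _ ≤ 2 ^ (s * p / D) * V * F + κ * (2 * I) := by
        gcongr
        · exact tsum_two_rpow_mul_measure_lt_le_lintegral ν hf hp
        · exact tsum_lintegral_lintegral_dyadicKernel_le hp (by linarith)
    _ ≤ (2 * κ + 2 ^ (s * p / D)) * (I + V * F) := by
        calc _ = 2 * κ * I + 2 ^ (s * p / D) * (V * F) := by ring
          _ ≤ 2 * κ * I + 2 ^ (s * p / D) * (V * F) + (2 * κ * (V * F) + 2 ^ (s * p / D) * I) :=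
            le_self_add
          _ = _ := by ring
    _ = _ := by
        rw [ENNReal.ofReal_add (by positivity) (by positivity), ENNReal.ofReal_mul zero_le_two,
          ENNReal.ofReal_ofNat, ← ENNReal.ofReal_rpow_of_pos (by linarith),
          ← ENNReal.ofReal_rpow_of_pos two_pos, ENNReal.ofReal_ofNat]

/-- **Discretized Sobolev bound (analogue of Lemma 6.3 of the Hitchhiker's guide).**
Let `(Z,d,ν)` be an Ahlfors `D`-regular metric measure space with constant `c ≥ 1`,
`s ∈ (0,1)`, `p ∈ [1,∞)` with `s·p < D`, and `f : Z → ℂ` bounded measurable with compact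
support.  With `A_k = {|f| > 2^k}` and `a_k = ν(A_k)` for `k ∈ ℤ`, there is a constant
`C > 0` depending only on `c, D, s, p` such that
`Σ_{k ∈ ℤ, a_k ≠ 0} 2^{kp}·a_{k+1}·a_k^{−sp/D} ≤ C·(∬ |f(ξ)−f(η)|^p/d^{D+sp} + ν(Z)^{−sp/D}·∫|f|^p)`. -/
theorem discretized_sobolev_bound
    {Z : Type*} [MetricSpace Z] [CompleteSpace Z] [MeasurableSpace Z] [BorelSpace Z]
    (hperf : ∀ z : Z, (nhdsWithin z {z}ᶜ).NeBot)
    (ν : Measure Z) (D c : ℝ) (hD : 0 < D) (hc : 1 ≤ c)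
    (hA : ∀ (z : Z) (r : ℝ), 0 < r → ENNReal.ofReal r < EMetric.diam (Set.univ : Set Z) →
      ENNReal.ofReal (c⁻¹ * r ^ D) ≤ ν (Metric.ball z r) ∧
        ν (Metric.ball z r) ≤ ENNReal.ofReal (c * r ^ D))
    (s p : ℝ) (hs : 0 < s) (hs1 : s < 1) (hp : 1 ≤ p) (hsp : s * p < D) :
    ∃ C : ℝ, 0 < C ∧
      ∀ f : Z → ℂ, Measurable f → HasCompactSupport f → (∃ M : ℝ, ∀ ξ, ‖f ξ‖ ≤ M) →
        (∑' k : ℤ,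
          if ν {ξ | (2 : ℝ) ^ k < ‖f ξ‖} = 0 then 0 else
            ENNReal.ofReal ((2 : ℝ) ^ ((k : ℝ) * p)) *
              ν {ξ | (2 : ℝ) ^ (k + 1) < ‖f ξ‖} *
              (ν {ξ | (2 : ℝ) ^ k < ‖f ξ‖}) ^ (-(s * p) / D)) ≤
        ENNReal.ofReal C *
          ((∫⁻ ξ, ∫⁻ η, (‖f ξ - f η‖₊ : ℝ≥0∞) ^ p / (edist ξ η) ^ (D + s * p) ∂ν ∂ν) +
            (ν Set.univ) ^ (-(s * p) / D) * ∫⁻ ξ, (‖f ξ‖₊ : ℝ≥0∞) ^ p ∂ν) :=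
  discretized_sobolev_bound_general ν D c hD hc hA s p hs hp
end

section
/- Let (Z,d) be a metric space, ν a Borel measure on Z, D > 0, and let g : Z → Z be a bijection with metric derivative Dg : Z → (0,∞), i.e. d(gξ,gη)² = Dg(ξ)·Dg(η)·d(ξ,η)² for all ξ,η ∈ Z. Then: (i) for every a ∈ Z and all ξ,η ∈ Z ∖ {a} one has d_{ga}(gξ,gη) = d_a(ξ,η)/Dg(a); and (ii) if moreover ν(g(A)) = ∫_A Dg(ξ)^D dν(ξ) for every Borel set A ⊆ Z, then for every a ∈ Z and every Borel set A ⊆ Z ∖ {a} one has ν_{ga}(g(A)) = Dg(a)^{−D} · ν_a(A). -/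
open MeasureTheory
open scoped ENNReal

/-! Both rules come from the pointwise scaling `d(g x, g y) = √(Dg x) √(Dg y) d(x, y)`.
For (ii) one needs `g` to be a Borel isomorphism, so that the hypothesis on `ν` reads
`ν = g_* (Dg^D • ν)`. Continuity is automatic: dividing the triangle inequality for `g` by
`√(Dg x Dg y Dg z)` shows that `G = (√Dg)⁻¹` satisfies
`G z d(x, y) ≤ G y d(x, z) + G x d(z, y)`, which makes `G` locally Lipschitz, hence `Dg` and
`g` continuous; the same applies to `g⁻¹`, whose metric derivative is `(Dg ∘ g⁻¹)⁻¹`. -/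

theorem abs_sub_le_of_mul_dist_le_add {X : Type*} [PseudoMetricSpace X] {G : X → ℝ}
    (hG : ∀ x, 0 ≤ G x) (h : ∀ x y z, G z * dist x y ≤ G y * dist x z + G x * dist z y)
    {p q : X} (hqp : 0 < dist q p) (ζ : X) :
    |G ζ - G p| ≤ (G p + G q) / dist q p * dist ζ p := by
  rw [div_mul_eq_mul_div]
  refine abs_sub_le_iff.2 ⟨?_, ?_⟩ <;> rw [le_div_iff₀ hqp]
  · have tri := mul_le_mul_of_nonneg_left (dist_triangle q p ζ) (hG p)
    rw [dist_comm p ζ] at tri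
    linarith [h q p ζ]
  · have tri := mul_le_mul_of_nonneg_left (dist_triangle q ζ p) (hG p)
    have hqζp := h q ζ p
    rw [dist_comm p ζ] at hqζp
    linarith

theorem continuous_of_mul_dist_le_add {X : Type*} [MetricSpace X] {G : X → ℝ}
    (hG : ∀ x, 0 ≤ G x) (h : ∀ x y z, G z * dist x y ≤ G y * dist x z + G x * dist z y) :
    Continuous G := by
  refine continuous_iff_continuousAt.2 fun p => ?_
  by_cases hp : ∃ q, q ≠ p
  · obtain ⟨q, hqp⟩ := hp
    rw [ContinuousAt, tendsto_iff_dist_tendsto_zero]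
    refine squeeze_zero (fun _ => dist_nonneg) (fun ζ => (Real.dist_eq _ _).trans_le
      (abs_sub_le_of_mul_dist_le_add hG h (dist_pos.2 hqp) ζ)) ?_
    simpa using ((continuous_id.dist continuous_const).tendsto' p 0 (dist_self p)).const_mul
      ((G p + G q) / dist q p)
  · push Not at hp
    rw [show G = fun _ => G p from funext fun x => congrArg G (hp x)]
    exact continuousAt_const

def HasMetricDerivative {X Y : Type*} [PseudoMetricSpace X] [PseudoMetricSpace Y]
    (g : X → Y) (Dg : X → ℝ) : Prop :=
  ∀ x y, dist (g x) (g y) ^ 2 = Dg x * Dg y * dist x y ^ 2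

namespace HasMetricDerivative

variable {X Y : Type*}

section PseudoMetric

variable [PseudoMetricSpace X] [PseudoMetricSpace Y] {g : X → Y} {Dg : X → ℝ}

theorem dist_eq (hg : HasMetricDerivative g Dg) (hDg : ∀ x, 0 ≤ Dg x) (x y : X) :
    dist (g x) (g y) = √(Dg x) * √(Dg y) * dist x y := by
  rw [← Real.sqrt_sq dist_nonneg, hg, Real.sqrt_mul (mul_nonneg (hDg x) (hDg y)),
    Real.sqrt_mul (hDg x), Real.sqrt_sq dist_nonneg]

theorem dist_div_dist_mul_dist (hg : HasMetricDerivative g Dg) (hDg : ∀ x, 0 < Dg x)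
    (a x y : X) :
    dist (g x) (g y) / (dist (g x) (g a) * dist (g y) (g a)) =
      dist x y / (dist x a * dist y a) / Dg a := by
  have hDg' : ∀ x, 0 ≤ Dg x := fun x => (hDg x).le
  have hxy : √(Dg x) * √(Dg y) ≠ 0 := by
    have := Real.sqrt_pos.2 (hDg x); have := Real.sqrt_pos.2 (hDg y); positivity
  calc _ = √(Dg x) * √(Dg y) * dist x y /
        (√(Dg x) * √(Dg y) * (dist x a * dist y a * (√(Dg a) * √(Dg a)))) := by
        rw [hg.dist_eq hDg', hg.dist_eq hDg', hg.dist_eq hDg']; ring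
    _ = _ := by rw [mul_div_mul_left _ _ hxy, Real.mul_self_sqrt (hDg' a), div_div]

theorem inv_sqrt_mul_dist_le (hg : HasMetricDerivative g Dg) (hDg : ∀ x, 0 < Dg x)
    (x y z : X) :
    (√(Dg z))⁻¹ * dist x y ≤ (√(Dg y))⁻¹ * dist x z + (√(Dg x))⁻¹ * dist z y := by
  have hx := Real.sqrt_pos.2 (hDg x)
  have hy := Real.sqrt_pos.2 (hDg y)
  have hz := Real.sqrt_pos.2 (hDg z)
  have h := dist_triangle (g x) (g z) (g y)
  rw [hg.dist_eq (fun x => (hDg x).le), hg.dist_eq (fun x => (hDg x).le),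
    hg.dist_eq (fun x => (hDg x).le)] at h
  calc (√(Dg z))⁻¹ * dist x y
        = √(Dg x) * √(Dg y) * dist x y / (√(Dg x) * √(Dg y) * √(Dg z)) := by field_simp
    _ ≤ (√(Dg x) * √(Dg z) * dist x z + √(Dg z) * √(Dg y) * dist z y) /
          (√(Dg x) * √(Dg y) * √(Dg z)) := by gcongr
    _ = (√(Dg y))⁻¹ * dist x z + (√(Dg x))⁻¹ * dist z y := by field_simp

theorem rpow_mul_dist_rpow (hg : HasMetricDerivative g Dg) (hDg : ∀ x, 0 < Dg x)
    (a x : X) (s : ℝ) :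
    Dg x ^ s * dist (g a) (g x) ^ (-(2 * s)) = Dg a ^ (-s) * dist a x ^ (-(2 * s)) := by
  have hx := hDg x
  have hsq : ∀ t : ℝ, 0 ≤ t → t ^ (-(2 * s)) = (t ^ 2) ^ (-s) := fun t ht => by
    rw [neg_mul_eq_mul_neg, ← Real.rpow_natCast_mul ht]; norm_num
  rw [hsq _ dist_nonneg, hsq _ dist_nonneg, hg,
    Real.mul_rpow (mul_nonneg (hDg a).le hx.le) (sq_nonneg _), Real.mul_rpow (hDg a).le hx.le,
    Real.rpow_neg hx.le s]
  field_simp [(Real.rpow_pos_of_pos hx s).ne']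

theorem ofReal_rpow_mul_ofReal_dist_rpow (hg : HasMetricDerivative g Dg)
    (hDg : ∀ x, 0 < Dg x) {a x : X} (hxa : 0 < dist a x) (s : ℝ) :
    ENNReal.ofReal (Dg x ^ s) * ENNReal.ofReal (dist (g a) (g x)) ^ (-(2 * s)) =
      ENNReal.ofReal (Dg a ^ (-s)) * ENNReal.ofReal (dist a x) ^ (-(2 * s)) := by
  have hgxa : 0 < dist (g a) (g x) := by
    rw [hg.dist_eq (fun x => (hDg x).le)]
    have := Real.sqrt_pos.2 (hDg a); have := Real.sqrt_pos.2 (hDg x); positivity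
  rw [ENNReal.ofReal_rpow_of_pos hgxa, ENNReal.ofReal_rpow_of_pos hxa,
    ← ENNReal.ofReal_mul (Real.rpow_nonneg (hDg x).le s),
    ← ENNReal.ofReal_mul (Real.rpow_nonneg (hDg a).le (-s)), hg.rpow_mul_dist_rpow hDg]

theorem symm {e : X ≃ Y} (he : HasMetricDerivative e Dg) (hDg : ∀ x, 0 < Dg x) :
    HasMetricDerivative e.symm fun y => (Dg (e.symm y))⁻¹ := by
  intro x y
  have h := he (e.symm x) (e.symm y)
  have hx := (hDg (e.symm x)).ne'
  have hy := (hDg (e.symm y)).ne'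
  rw [e.apply_symm_apply, e.apply_symm_apply] at h
  rw [h]
  field_simp

end PseudoMetric

section Continuity

variable [MetricSpace X] [PseudoMetricSpace Y] {g : X → Y} {Dg : X → ℝ}

theorem continuous_deriv (hg : HasMetricDerivative g Dg) (hDg : ∀ x, 0 < Dg x) :
    Continuous Dg := by
  have hG := continuous_of_mul_dist_le_add (fun x => inv_nonneg.2 (Real.sqrt_nonneg (Dg x)))
    (hg.inv_sqrt_mul_dist_le hDg)
  have hne : ∀ x, (√(Dg x))⁻¹ ≠ 0 := fun x => (inv_pos.2 (Real.sqrt_pos.2 (hDg x))).ne'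
  refine ((hG.pow 2).inv₀ fun x => pow_ne_zero 2 (hne x)).congr fun x => ?_
  change ((√(Dg x))⁻¹ ^ 2)⁻¹ = Dg x
  rw [inv_pow, inv_inv, Real.sq_sqrt (hDg x).le]

theorem continuous (hg : HasMetricDerivative g Dg) (hDg : ∀ x, 0 < Dg x) : Continuous g := by
  have hsqrt := Real.continuous_sqrt.comp (hg.continuous_deriv hDg)
  refine continuous_iff_continuousAt.2 fun p => ?_
  rw [ContinuousAt, tendsto_iff_dist_tendsto_zero]
  simp_rw [hg.dist_eq (fun x => (hDg x).le)]
  simpa using ((hsqrt.tendsto p).mul_const (√(Dg p))).mul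
    ((continuous_id.dist continuous_const).tendsto' p 0 (dist_self p))

end Continuity

section Metric

variable [MetricSpace X] [MetricSpace Y] {Dg : X → ℝ}

def toHomeomorph (e : X ≃ Y) (he : HasMetricDerivative e Dg)
    (hDg : ∀ x, 0 < Dg x) : X ≃ₜ Y where
  toEquiv := e
  continuous_toFun := he.continuous hDg
  continuous_invFun := (he.symm hDg).continuous fun y => inv_pos.2 (hDg (e.symm y))

end Metric

end HasMetricDerivative

theorem setLIntegral_image_eq_setLIntegral_mul {X Y : Type*} [MeasurableSpace X]
    [MeasurableSpace Y] (e : X ≃ᵐ Y) {μ : Measure X} {ν : Measure Y} {w : X → ℝ≥0∞}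
    (hw : Measurable w) (hν : ∀ A, MeasurableSet A → ν (e '' A) = ∫⁻ x in A, w x ∂μ)
    {f : Y → ℝ≥0∞} (hf : Measurable f) {A : Set X} (hA : MeasurableSet A) :
    ∫⁻ y in e '' A, f y ∂ν = ∫⁻ x in A, w x * f (e x) ∂μ := by
  have hmap : (μ.withDensity w).map e = ν := by
    ext s hs
    rw [e.map_apply, withDensity_apply _ (e.measurable hs), ← hν _ (e.measurable hs),
      e.image_preimage]
  rw [← hmap, e.restrict_map, e.measurableEmbedding.lintegral_map, e.preimage_image]
  exact setLIntegral_withDensity_eq_setLIntegral_mul _ hw (hf.comp e.measurable) hA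

theorem conformal_bundle_transformation_rules_general
    {Z : Type*} [MetricSpace Z] [MeasurableSpace Z] [BorelSpace Z]
    (ν : Measure Z) (D : ℝ)
    (g : Z → Z) (hg : Function.Bijective g)
    (Dg : Z → ℝ) (hDg : ∀ ξ, 0 < Dg ξ)
    (hmd : ∀ ξ η : Z, dist (g ξ) (g η) ^ 2 = Dg ξ * Dg η * dist ξ η ^ 2) :
    (∀ (a ξ η : Z), ξ ≠ a → η ≠ a →
      dist (g ξ) (g η) / (dist (g ξ) (g a) * dist (g η) (g a)) =
        (dist ξ η / (dist ξ a * dist η a)) / Dg a) ∧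
    ((∀ A : Set Z, MeasurableSet A →
        ν (g '' A) = ∫⁻ ξ in A, ENNReal.ofReal (Dg ξ ^ D) ∂ν) →
      ∀ (a : Z) (A : Set Z), MeasurableSet A → A ⊆ ({a}ᶜ : Set Z) →
        (∫⁻ ξ in g '' A, (ENNReal.ofReal (dist (g a) ξ)) ^ (-(2 * D)) ∂ν) =
          ENNReal.ofReal (Dg a ^ (-D)) *
            ∫⁻ ξ in A, (ENNReal.ofReal (dist a ξ)) ^ (-(2 * D)) ∂ν) := by
  have hmd : HasMetricDerivative g Dg := hmd
  refine ⟨fun a ξ η _ _ => hmd.dist_div_dist_mul_dist hDg a ξ η, fun hν a A hA hAa => ?_⟩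
  let E := HasMetricDerivative.toHomeomorph (Equiv.ofBijective g hg) hmd hDg
  have hw : Measurable fun ξ => ENNReal.ofReal (Dg ξ ^ D) :=
    ((hmd.continuous_deriv hDg).measurable.pow_const D).ennreal_ofReal
  have hf : Measurable fun y => ENNReal.ofReal (dist (g a) y) ^ (-(2 * D)) := by fun_prop
  refine (setLIntegral_image_eq_setLIntegral_mul E.toMeasurableEquiv hw hν hf hA).trans ?_
  rw [← lintegral_const_mul' _ _ ENNReal.ofReal_ne_top]
  exact setLIntegral_congr_fun hA fun ξ hξ =>
    hmd.ofReal_rpow_mul_ofReal_dist_rpow hDg (dist_pos.2 (Ne.symm (hAa hξ))) D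

/-- **Transformation rules for the metric conformal bundle.**
Let `(Z,d)` be a metric space, `ν` a Borel measure, `D > 0`, and `g : Z → Z` a bijection
with metric derivative `Dg : Z → (0,∞)`, i.e. `d(gξ,gη)² = Dg(ξ)·Dg(η)·d(ξ,η)²`. Then:
(i) `d_{ga}(gξ,gη) = d_a(ξ,η)/Dg(a)` for `ξ,η ≠ a`; and
(ii) if `ν(g(A)) = ∫_A Dg^D dν` for every Borel `A`, then
`ν_{ga}(g(A)) = Dg(a)^{−D}·ν_a(A)` for Borel `A ⊆ Z∖{a}`,
where `d_a(ξ,η) = d(ξ,η)/(d(ξ,a)d(η,a))` and `dν_a = d(a,·)^{−2D} dν`. -/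
theorem conformal_bundle_transformation_rules
    {Z : Type*} [MetricSpace Z] [MeasurableSpace Z] [BorelSpace Z]
    (ν : Measure Z) (D : ℝ) (hD : 0 < D)
    (g : Z → Z) (hg : Function.Bijective g)
    (Dg : Z → ℝ) (hDg : ∀ ξ, 0 < Dg ξ)
    (hmd : ∀ ξ η : Z, dist (g ξ) (g η) ^ 2 = Dg ξ * Dg η * dist ξ η ^ 2) :
    (∀ (a ξ η : Z), ξ ≠ a → η ≠ a →
      dist (g ξ) (g η) / (dist (g ξ) (g a) * dist (g η) (g a)) =
        (dist ξ η / (dist ξ a * dist η a)) / Dg a) ∧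
    ((∀ A : Set Z, MeasurableSet A →
        ν (g '' A) = ∫⁻ ξ in A, ENNReal.ofReal (Dg ξ ^ D) ∂ν) →
      ∀ (a : Z) (A : Set Z), MeasurableSet A → A ⊆ ({a}ᶜ : Set Z) →
        (∫⁻ ξ in g '' A, (ENNReal.ofReal (dist (g a) ξ)) ^ (-(2 * D)) ∂ν) =
          ENNReal.ofReal (Dg a ^ (-D)) *
            ∫⁻ ξ in A, (ENNReal.ofReal (dist a ξ)) ^ (-(2 * D)) ∂ν) :=
  conformal_bundle_transformation_rules_general ν D g hg Dg hDg hmd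
end

section
/- Let (Z,d) be a metric space, ν a Borel measure on Z, D > 0, and let g : Z → Z be a bijection with metric derivative Dg : Z → (0,∞) (i.e. d(gξ,gη)² = Dg(ξ)·Dg(η)·d(ξ,η)² for all ξ,η ∈ Z) satisfying the change-of-variables formula ν(g(A)) = ∫_A Dg(ξ)^D dν(ξ) for every Borel set A ⊆ Z. Let p ∈ [1,∞), s ∈ (0,1), t ∈ ℝ, z = s + i·t, and a ∈ Z. Then for every measurable φ : Z_a → ℂ, the function Π φ : Z_{ga} → ℂ defined by (Π φ)(ξ) = Dg(a)^{D/p−z}·φ(g⁻¹ξ) satisfies ∬_{Z_{ga}×Z_{ga}} |Π φ(ξ) − Π φ(η)|^p / d_{ga}(ξ,η)^{D+s·p} dν_{ga}(ξ)dν_{ga}(η) = ∬_{Z_a×Z_a} |φ(ξ)−φ(η)|^p / d_a(ξ,η)^{D+s·p} dν_a(ξ)dν_a(η), as an identity in the extended nonnegative reals. (This says Π_z^{(p)}(g;a) is an isometry between the homogeneous fractional Sobolev spaces of (Z_a,d_a,ν_a) and (Z_{ga},d_{ga},ν_{ga}).) -/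
/-! By the metric-derivative identity, `g` rescales the inverted metrics by a constant,
`d_{ga}(gξ, gη) = d_a(ξ, η) / Dg(a)`, and together with the change-of-variables formula it turns
`ν_{ga}` into the push-forward of `Dg(a)^{-D} ν_a`. So the integrand for `Πφ` at `(gξ, gη)` is
`Dg(a)^{(D/p - s)p + (D + sp)} = Dg(a)^{2D}` times the integrand for `φ` at `(ξ, η)`, and this
factor exactly cancels the two factors `Dg(a)^{-D}` that come from the measures. -/

open MeasureTheory
open scoped ENNReal

section ChangeOfVariables

variable {α β : Type*} [MeasurableSpace α] [MeasurableSpace β]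

theorem map_withDensity_eq_of_measure_image (e : α ≃ᵐ β) {μ : Measure α} {ν : Measure β}
    {J : α → ℝ≥0∞} (hcv : ∀ A, MeasurableSet A → ν (e '' A) = ∫⁻ ξ in A, J ξ ∂μ) :
    (μ.withDensity J).map e = ν := by
  ext B hB
  rw [e.map_apply, withDensity_apply _ (e.measurable hB), ← hcv _ (e.measurable hB),
    e.image_preimage]

theorem withDensity_eq_smul_map_withDensity (e : α ≃ᵐ β) {μ : Measure α} {ν : Measure β}
    {J : α → ℝ≥0∞} {w : β → ℝ≥0∞} {w' : α → ℝ≥0∞} (hJ : Measurable J) (hw : Measurable w)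
    (hw' : Measurable w') (hcv : ∀ A, MeasurableSet A → ν (e '' A) = ∫⁻ ξ in A, J ξ ∂μ)
    {c : ℝ≥0∞} (hdens : ∀ ξ, J ξ * w (e ξ) = c * w' ξ) :
    ν.withDensity w = c • (μ.withDensity w').map e := by
  ext B hB
  have hB' := e.measurable hB
  rw [withDensity_apply _ hB, Measure.smul_apply, e.map_apply, withDensity_apply _ hB',
    smul_eq_mul, ← lintegral_const_mul _ hw', ← map_withDensity_eq_of_measure_image e hcv,
    setLIntegral_map hB hw e.measurable,
    setLIntegral_withDensity_eq_setLIntegral_mul _ hJ (g := fun ξ => w (e ξ))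
      (hw.comp e.measurable) hB']
  exact setLIntegral_congr_fun hB' fun ξ _ => hdens ξ

end ChangeOfVariables

theorem ENNReal.rpow_mul_rpow_div_div_rpow {C : ℝ≥0∞} (hC₀ : C ≠ 0) (hC : C ≠ ∞)
    (X R : ℝ≥0∞) {γ p e : ℝ} (hp : 0 ≤ p) (he : 0 ≤ e) :
    (C ^ γ * X) ^ p / (R / C) ^ e = C ^ (γ * p + e) * (X ^ p / R ^ e) := by
  have hCe₀ : C ^ e ≠ 0 := (ENNReal.rpow_pos (pos_iff_ne_zero.2 hC₀) hC).ne'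
  have hCe : C ^ e ≠ ∞ := ENNReal.rpow_ne_top_of_nonneg he hC
  rw [ENNReal.mul_rpow_of_nonneg _ _ hp, ← ENNReal.rpow_mul, ENNReal.div_rpow_of_nonneg _ _ he,
    ENNReal.rpow_add _ _ hC₀ hC, div_eq_mul_inv, div_eq_mul_inv, div_eq_mul_inv,
    ENNReal.mul_inv (.inr (ENNReal.inv_ne_top.2 hCe₀)) (.inr (ENNReal.inv_ne_zero.2 hCe)),
    inv_inv]
  ring

theorem Complex.enorm_cpow_mul_sub_cpow_mul {c : ℝ} (hc : 0 < c) (w x y : ℂ) :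
    ‖(c : ℂ) ^ w * x - (c : ℂ) ^ w * y‖ₑ = ENNReal.ofReal c ^ w.re * ‖x - y‖ₑ := by
  rw [← mul_sub, enorm_mul, ← ofReal_norm, Complex.norm_cpow_eq_rpow_re_of_pos hc,
    ENNReal.ofReal_rpow_of_pos hc]

section MetricDerivative

variable {Z : Type*} [MetricSpace Z] {g : Z → Z} {Dg : Z → ℝ}

theorem ofReal_rpow_mul_ofReal_dist_rpow_of_metric_derivative (hDg : ∀ ξ, 0 < Dg ξ)
    (hmd : ∀ ξ η, dist (g ξ) (g η) ^ 2 = Dg ξ * Dg η * dist ξ η ^ 2) (D : ℝ) (a ξ : Z) :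
    ENNReal.ofReal (Dg ξ ^ D) * ENNReal.ofReal (dist (g a) (g ξ)) ^ (-(2 * D)) =
      ENNReal.ofReal (Dg a) ^ (-D) * ENNReal.ofReal (dist a ξ) ^ (-(2 * D)) := by
  have hsq : ∀ x : ℝ, 0 ≤ x → ENNReal.ofReal x ^ (-(2 * D)) = ENNReal.ofReal (x ^ 2) ^ (-D) := by
    intro x hx
    rw [ENNReal.ofReal_pow hx, ← ENNReal.rpow_natCast_mul, neg_mul_eq_mul_neg, Nat.cast_ofNat]
  have hξ₀ : ENNReal.ofReal (Dg ξ) ≠ 0 := ENNReal.ofReal_ne_zero_iff.2 (hDg ξ)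
  rw [← ENNReal.ofReal_rpow_of_pos (hDg ξ), hsq _ dist_nonneg, hsq _ dist_nonneg, hmd,
    ENNReal.ofReal_mul (mul_pos (hDg a) (hDg ξ)).le, ENNReal.ofReal_mul (hDg a).le,
    ENNReal.mul_rpow_of_ne_top (by finiteness) (by finiteness),
    ENNReal.mul_rpow_of_ne_top (by finiteness) (by finiteness), mul_comm (_ ^ (-D)),
    mul_assoc, ← mul_assoc (_ ^ D), ← ENNReal.rpow_add _ _ hξ₀ ENNReal.ofReal_ne_top,
    add_neg_cancel, ENNReal.rpow_zero, one_mul]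

-- No `ξ, η ≠ a` is needed: at `ξ = a` or `η = a` both sides are `x / 0 = 0`.
theorem dist_div_dist_mul_dist_of_metric_derivative (hDg : ∀ ξ, 0 < Dg ξ)
    (hmd : ∀ ξ η, dist (g ξ) (g η) ^ 2 = Dg ξ * Dg η * dist ξ η ^ 2) (a ξ η : Z) :
    dist (g ξ) (g η) / (dist (g ξ) (g a) * dist (g η) (g a)) =
      dist ξ η / (dist ξ a * dist η a) / Dg a := by
  have hξ := hDg ξ
  have hη := hDg η
  have ha := hDg a
  rw [← sq_eq_sq₀ (by positivity) (by positivity), div_pow, mul_pow, hmd, hmd, hmd, div_pow,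
    div_pow, mul_pow]
  field_simp

theorem energy_density_comp_of_metric_derivative (hDg : ∀ ξ, 0 < Dg ξ)
    (hmd : ∀ ξ η, dist (g ξ) (g η) ^ 2 = Dg ξ * Dg η * dist ξ η ^ 2) {D p s : ℝ} (hp : 0 < p)
    (hσ : 0 ≤ D + s * p) (t : ℝ) (a ξ η : Z) (x y : ℂ) :
    ENNReal.ofReal (Dg a) ^ (-D) * (ENNReal.ofReal (Dg a) ^ (-D) *
      (‖(Dg a : ℂ) ^ (((D / p - s : ℝ) : ℂ) - t * Complex.I) * x -
          (Dg a : ℂ) ^ (((D / p - s : ℝ) : ℂ) - t * Complex.I) * y‖ₑ ^ p /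
        ENNReal.ofReal (dist (g ξ) (g η) / (dist (g ξ) (g a) * dist (g η) (g a))) ^ (D + s * p))) =
      ‖x - y‖ₑ ^ p / ENNReal.ofReal (dist ξ η / (dist ξ a * dist η a)) ^ (D + s * p) := by
  have hC₀ : ENNReal.ofReal (Dg a) ≠ 0 := ENNReal.ofReal_ne_zero_iff.2 (hDg a)
  have hexp : -D + -D + ((((D / p - s : ℝ) : ℂ) - t * Complex.I).re * p + (D + s * p)) = 0 := by
    simp only [Complex.sub_re, Complex.ofReal_re, Complex.mul_re, Complex.I_re,
      Complex.I_im, Complex.ofReal_im]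
    field_simp
    ring
  rw [Complex.enorm_cpow_mul_sub_cpow_mul (hDg a),
    dist_div_dist_mul_dist_of_metric_derivative hDg hmd, ENNReal.ofReal_div_of_pos (hDg a),
    ENNReal.rpow_mul_rpow_div_div_rpow hC₀ ENNReal.ofReal_ne_top _ _ hp.le hσ,
    ← mul_assoc, ← mul_assoc, ← ENNReal.rpow_add _ _ hC₀ ENNReal.ofReal_ne_top,
    ← ENNReal.rpow_add _ _ hC₀ ENNReal.ofReal_ne_top, hexp, ENNReal.rpow_zero, one_mul]

theorem restrict_withDensity_dist_rpow_map [MeasurableSpace Z] [OpensMeasurableSpace Z]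
    (ν : Measure Z) (D : ℝ) (e : Z ≃ᵐ Z) {Dg : Z → ℝ} (hDg : ∀ ξ, 0 < Dg ξ)
    (hDgm : Measurable Dg)
    (hmd : ∀ ξ η, dist (e ξ) (e η) ^ 2 = Dg ξ * Dg η * dist ξ η ^ 2)
    (hcv : ∀ A, MeasurableSet A → ν (e '' A) = ∫⁻ ξ in A, ENNReal.ofReal (Dg ξ ^ D) ∂ν)
    (a : Z) :
    (ν.withDensity fun ζ => ENNReal.ofReal (dist (e a) ζ) ^ (-(2 * D))).restrict {e a}ᶜ =
      ENNReal.ofReal (Dg a) ^ (-D) •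
        ((ν.withDensity fun ζ => ENNReal.ofReal (dist a ζ) ^ (-(2 * D))).restrict {a}ᶜ).map e := by
  have hw : ∀ b : Z, Measurable fun ζ => ENNReal.ofReal (dist b ζ) ^ (-(2 * D)) := fun b =>
    (continuous_const.dist continuous_id).measurable.ennreal_ofReal.pow_const _
  rw [withDensity_eq_smul_map_withDensity e (hDgm.pow_const D).ennreal_ofReal (hw _) (hw a) hcv
      (ofReal_rpow_mul_ofReal_dist_rpow_of_metric_derivative hDg hmd D a), Measure.restrict_smul, e.restrict_map,
    Set.preimage_compl, ← Set.image_singleton, e.preimage_image]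

end MetricDerivative

theorem bundle_representation_isometric_general
    {Z : Type*} [MetricSpace Z] [MeasurableSpace Z] [BorelSpace Z]
    (ν : Measure Z) (D : ℝ) (hD : 0 < D)
    (g ginv : Z → Z)
    (hlinv : Function.LeftInverse ginv g) (hrinv : Function.RightInverse ginv g)
    (hgm : Measurable g) (hginvm : Measurable ginv)
    (Dg : Z → ℝ) (hDg : ∀ ξ, 0 < Dg ξ) (hDgm : Measurable Dg)
    (hmd : ∀ ξ η : Z, dist (g ξ) (g η) ^ 2 = Dg ξ * Dg η * dist ξ η ^ 2)
    (hcv : ∀ A : Set Z, MeasurableSet A →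
      ν (g '' A) = ∫⁻ ξ in A, ENNReal.ofReal (Dg ξ ^ D) ∂ν)
    (p s t : ℝ) (hp : 1 ≤ p) (hs : 0 < s)
    (a : Z) (φ : Z → ℂ) :
    (∫⁻ ξ in ({g a}ᶜ : Set Z), ∫⁻ η in ({g a}ᶜ : Set Z),
        (‖((Dg a : ℝ) : ℂ) ^ (((D / p - s : ℝ) : ℂ) - (t : ℂ) * Complex.I) * φ (ginv ξ) -
            ((Dg a : ℝ) : ℂ) ^ (((D / p - s : ℝ) : ℂ) - (t : ℂ) * Complex.I) * φ (ginv η)‖₊ : ℝ≥0∞) ^ p /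
          (ENNReal.ofReal (dist ξ η / (dist ξ (g a) * dist η (g a)))) ^ (D + s * p)
      ∂(ν.withDensity fun ζ => (ENNReal.ofReal (dist (g a) ζ)) ^ (-(2 * D)))
      ∂(ν.withDensity fun ζ => (ENNReal.ofReal (dist (g a) ζ)) ^ (-(2 * D)))) =
    (∫⁻ ξ in ({a}ᶜ : Set Z), ∫⁻ η in ({a}ᶜ : Set Z),
        (‖φ ξ - φ η‖₊ : ℝ≥0∞) ^ p /
          (ENNReal.ofReal (dist ξ η / (dist ξ a * dist η a))) ^ (D + s * p)
      ∂(ν.withDensity fun ζ => (ENNReal.ofReal (dist a ζ)) ^ (-(2 * D)))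
      ∂(ν.withDensity fun ζ => (ENNReal.ofReal (dist a ζ)) ^ (-(2 * D)))) := by
  obtain ⟨e, rfl⟩ : ∃ e : Z ≃ᵐ Z, ⇑e = g := ⟨⟨⟨g, ginv, hlinv, hrinv⟩, hgm, hginvm⟩, rfl⟩
  have hC : ENNReal.ofReal (Dg a) ^ (-D) ≠ ∞ :=
    ENNReal.rpow_ne_top_of_ne_zero (ENNReal.ofReal_ne_zero_iff.2 (hDg a)) ENNReal.ofReal_ne_top
  rw [restrict_withDensity_dist_rpow_map ν D e hDg hDgm hmd hcv a]
  simp only [lintegral_smul_measure, lintegral_map_equiv, hlinv _, smul_eq_mul]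
  rw [← lintegral_const_mul' _ _ hC]
  refine lintegral_congr fun ξ => ?_
  rw [← lintegral_const_mul' _ _ hC, ← lintegral_const_mul' _ _ hC]
  exact lintegral_congr fun η => energy_density_comp_of_metric_derivative hDg hmd
    (one_pos.trans_le hp) (by positivity) t a ξ η (φ ξ) (φ η)

/-- **`Π_z^{(p)}(g;a)` is an isometry between homogeneous fractional Sobolev energies.**
Let `(Z,d)` be a metric space, `ν` a Borel measure, `D > 0`, `g : Z → Z` a bijection with
inverse `ginv` and metric derivative `Dg` satisfying the change-of-variables formula.
Let `p ∈ [1,∞)`, `s ∈ (0,1)`, `t ∈ ℝ`, `z = s + it`, `a ∈ Z`. Then for every measurable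
`φ`, the Gagliardo energy of `Πφ : ξ ↦ Dg(a)^{D/p−z}·φ(g⁻¹ξ)` on `(Z_{ga}, d_{ga}, ν_{ga})`
equals that of `φ` on `(Z_a, d_a, ν_a)`, where `d_a(ξ,η) = d(ξ,η)/(d(ξ,a)d(η,a))` and
`dν_a = d(a,·)^{−2D} dν`. -/
theorem bundle_representation_isometric
    {Z : Type*} [MetricSpace Z] [MeasurableSpace Z] [BorelSpace Z]
    (ν : Measure Z) (D : ℝ) (hD : 0 < D)
    (g ginv : Z → Z) (hg : Function.Bijective g)
    (hlinv : Function.LeftInverse ginv g) (hrinv : Function.RightInverse ginv g)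
    (hgm : Measurable g) (hginvm : Measurable ginv)
    (Dg : Z → ℝ) (hDg : ∀ ξ, 0 < Dg ξ) (hDgm : Measurable Dg)
    (hmd : ∀ ξ η : Z, dist (g ξ) (g η) ^ 2 = Dg ξ * Dg η * dist ξ η ^ 2)
    (hcv : ∀ A : Set Z, MeasurableSet A →
      ν (g '' A) = ∫⁻ ξ in A, ENNReal.ofReal (Dg ξ ^ D) ∂ν)
    (p s t : ℝ) (hp : 1 ≤ p) (hs : 0 < s) (hs1 : s < 1)
    (a : Z) (φ : Z → ℂ) (hφ : Measurable φ) :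
    (∫⁻ ξ in ({g a}ᶜ : Set Z), ∫⁻ η in ({g a}ᶜ : Set Z),
        (‖((Dg a : ℝ) : ℂ) ^ (((D / p - s : ℝ) : ℂ) - (t : ℂ) * Complex.I) * φ (ginv ξ) -
            ((Dg a : ℝ) : ℂ) ^ (((D / p - s : ℝ) : ℂ) - (t : ℂ) * Complex.I) * φ (ginv η)‖₊ : ℝ≥0∞) ^ p /
          (ENNReal.ofReal (dist ξ η / (dist ξ (g a) * dist η (g a)))) ^ (D + s * p)
      ∂(ν.withDensity fun ζ => (ENNReal.ofReal (dist (g a) ζ)) ^ (-(2 * D)))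
      ∂(ν.withDensity fun ζ => (ENNReal.ofReal (dist (g a) ζ)) ^ (-(2 * D)))) =
    (∫⁻ ξ in ({a}ᶜ : Set Z), ∫⁻ η in ({a}ᶜ : Set Z),
        (‖φ ξ - φ η‖₊ : ℝ≥0∞) ^ p /
          (ENNReal.ofReal (dist ξ η / (dist ξ a * dist η a))) ^ (D + s * p)
      ∂(ν.withDensity fun ζ => (ENNReal.ofReal (dist a ζ)) ^ (-(2 * D)))
      ∂(ν.withDensity fun ζ => (ENNReal.ofReal (dist a ζ)) ^ (-(2 * D)))) :=
  bundle_representation_isometric_general ν D hD g ginv hlinv hrinv hgm hginvm Dg hDg hDgm hmd hcv p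
    s t hp hs a φ
end

section
/- Let (Z,d) be a metric space with at least two points, let g : Z → Z be a bijection with metric derivative Dg : Z → (0,∞), i.e. d(gξ,gη)² = Dg(ξ)·Dg(η)·d(ξ,η)² for all ξ,η ∈ Z, and let Dh : Z → (0,∞) be defined by Dh(ξ) = Dg(g⁻¹ξ)⁻¹ (the metric derivative of g⁻¹). Let D > 0, p ∈ [1,∞), z ∈ ℂ, a ∈ Z, and φ : Z → ℂ. Then for every ξ ∈ Z with ξ ≠ ga one has d(ξ,ga)^{−2D/p+2z} · Dg(a)^{D/p−z} · d(g⁻¹ξ,a)^{2D/p−2z} · φ(g⁻¹ξ) = Dh(ξ)^{D/p−z} · φ(g⁻¹ξ). (This is the identity Ω_{z,p}(ga)^{−1} ∘ Π_z^{(p)}(g;a) ∘ Ω_{z,p}(a) = π_z^{(p)}(g), exhibiting the boundary representation as a conjugate of the isometric bundle representation by the Cayley-transform operators.) -/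
open Metric Complex

/-!
Write `η = g⁻¹ξ` and `w = D/p - z`. The metric derivative identity at `(η, a)` reads
`d(ξ,ga)² = Dg(η)·Dg(a)·d(η,a)²`; raising it to the power `w` (legitimate, since all factors
are nonnegative reals) turns `d(ξ,ga)^{-2w}` into `(Dg(η)^w·Dg(a)^w·d(η,a)^{2w})⁻¹`, and
everything cancels except `Dg(η)^{-w} = (Dg(η)⁻¹)^w`.
-/

def IsMetricDerivative {X Y : Type*} [PseudoMetricSpace X] [PseudoMetricSpace Y] (g : X → Y)
    (Dg : X → ℝ) : Prop :=
  ∀ ξ η : X, dist (g ξ) (g η) ^ 2 = Dg ξ * Dg η * dist ξ η ^ 2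

namespace Complex

theorem ofReal_cpow_two_mul {x : ℝ} (hx : 0 ≤ x) (w : ℂ) :
    (x : ℂ) ^ (2 * w) = ((x ^ 2 : ℝ) : ℂ) ^ w := by
  rw [cpow_ofNat_mul, sq, sq, ofReal_mul, mul_cpow_ofReal_nonneg hx hx]

theorem ofReal_inv_cpow {x : ℝ} (hx : 0 ≤ x) (w : ℂ) :
    ((x⁻¹ : ℝ) : ℂ) ^ w = ((x : ℂ) ^ w)⁻¹ := by
  rw [ofReal_inv, inv_cpow _ _ (by rw [arg_ofReal_of_nonneg hx]; exact Real.pi_ne_zero.symm)]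

end Complex

theorem IsMetricDerivative.ofReal_dist_cpow_two_mul {X Y : Type*} [PseudoMetricSpace X]
    [PseudoMetricSpace Y] {g : X → Y} {Dg : X → ℝ} (hg : IsMetricDerivative g Dg)
    (hDg : ∀ ξ, 0 ≤ Dg ξ) (ξ η : X) (w : ℂ) :
    (dist (g ξ) (g η) : ℂ) ^ (2 * w) =
      (Dg ξ : ℂ) ^ w * (Dg η : ℂ) ^ w * (dist ξ η : ℂ) ^ (2 * w) := by
  rw [ofReal_cpow_two_mul dist_nonneg, hg, ofReal_mul,
    mul_cpow_ofReal_nonneg (mul_nonneg (hDg ξ) (hDg η)) (sq_nonneg _), ofReal_mul,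
    mul_cpow_ofReal_nonneg (hDg ξ) (hDg η), ofReal_cpow_two_mul dist_nonneg]

theorem boundary_representation_via_cayley_general
    {Z : Type*} [MetricSpace Z]
    (g ginv : Z → Z)
    (hrinv : Function.RightInverse ginv g)
    (Dg : Z → ℝ) (hDg : ∀ ξ, 0 < Dg ξ)
    (hmd : ∀ ξ η : Z, dist (g ξ) (g η) ^ 2 = Dg ξ * Dg η * dist ξ η ^ 2)
    (D p : ℝ)
    (z : ℂ) (a : Z) (φ : Z → ℂ) :
    ∀ ξ : Z, ξ ≠ g a →
      ((dist ξ (g a) : ℝ) : ℂ) ^ (((-(2 * D / p) : ℝ) : ℂ) + 2 * z) *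
          ((Dg a : ℝ) : ℂ) ^ (((D / p : ℝ) : ℂ) - z) *
          ((dist (ginv ξ) a : ℝ) : ℂ) ^ (((2 * D / p : ℝ) : ℂ) - 2 * z) *
          φ (ginv ξ) =
        (((Dg (ginv ξ))⁻¹ : ℝ) : ℂ) ^ (((D / p : ℝ) : ℂ) - z) * φ (ginv ξ) := by
  intro ξ hξ
  set w : ℂ := ((D / p : ℝ) : ℂ) - z with hw
  have hexp_neg : ((-(2 * D / p) : ℝ) : ℂ) + 2 * z = -(2 * w) := by rw [hw]; push_cast; ring
  have hexp : ((2 * D / p : ℝ) : ℂ) - 2 * z = 2 * w := by rw [hw]; push_cast; ring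
  have hdist : dist ξ (g a) = dist (g (ginv ξ)) (g a) := by rw [hrinv ξ]
  have hη : ginv ξ ≠ a := fun h ↦ hξ (by rw [← hrinv ξ, h])
  have hd_ne : (dist (ginv ξ) a : ℂ) ^ (2 * w) ≠ 0 := by simp [dist_pos.mpr hη |>.ne']
  have hDa_ne : (Dg a : ℂ) ^ w ≠ 0 := by simp [(hDg a).ne']
  have hDη_ne : (Dg (ginv ξ) : ℂ) ^ w ≠ 0 := by simp [(hDg _).ne']
  rw [hexp_neg, hexp, hdist, cpow_neg,
    IsMetricDerivative.ofReal_dist_cpow_two_mul hmd (fun ζ ↦ (hDg ζ).le),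
    ofReal_inv_cpow (hDg _).le]
  field_simp

/-- **The conjugation identity `Ω_{z,p}(ga)⁻¹ ∘ Π_z^{(p)}(g;a) ∘ Ω_{z,p}(a) = π_z^{(p)}(g)`.**
Let `(Z,d)` be a metric space with at least two points, `g : Z → Z` a bijection with
inverse `ginv` and metric derivative `Dg` (so `d(gξ,gη)² = Dg(ξ)Dg(η)d(ξ,η)²`), and let
`Dh(ξ) = Dg(g⁻¹ξ)⁻¹` be the metric derivative of `g⁻¹`. Let `D > 0`, `p ∈ [1,∞)`,
`z ∈ ℂ`, `a ∈ Z`, `φ : Z → ℂ`. Then for every `ξ ≠ ga`,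
`d(ξ,ga)^{−2D/p+2z}·Dg(a)^{D/p−z}·d(g⁻¹ξ,a)^{2D/p−2z}·φ(g⁻¹ξ) = Dh(ξ)^{D/p−z}·φ(g⁻¹ξ)`,
with principal complex powers. -/
theorem boundary_representation_via_cayley
    {Z : Type*} [MetricSpace Z] [Nontrivial Z]
    (g ginv : Z → Z) (hg : Function.Bijective g)
    (hlinv : Function.LeftInverse ginv g) (hrinv : Function.RightInverse ginv g)
    (Dg : Z → ℝ) (hDg : ∀ ξ, 0 < Dg ξ)
    (hmd : ∀ ξ η : Z, dist (g ξ) (g η) ^ 2 = Dg ξ * Dg η * dist ξ η ^ 2)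
    (D p : ℝ) (hD : 0 < D) (hp : 1 ≤ p)
    (z : ℂ) (a : Z) (φ : Z → ℂ) :
    ∀ ξ : Z, ξ ≠ g a →
      ((dist ξ (g a) : ℝ) : ℂ) ^ (((-(2 * D / p) : ℝ) : ℂ) + 2 * z) *
          ((Dg a : ℝ) : ℂ) ^ (((D / p : ℝ) : ℂ) - z) *
          ((dist (ginv ξ) a : ℝ) : ℂ) ^ (((2 * D / p : ℝ) : ℂ) - 2 * z) *
          φ (ginv ξ) =
        (((Dg (ginv ξ))⁻¹ : ℝ) : ℂ) ^ (((D / p : ℝ) : ℂ) - z) * φ (ginv ξ) :=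
  boundary_representation_via_cayley_general g ginv hrinv Dg hDg hmd D p z a φ
end

section
/- Let (Z,d) be a metric space, ν a Borel measure on Z, D > 0, and let g : Z → Z be a bijection with metric derivative Dg : Z → (0,∞) (i.e. d(gξ,gη)² = Dg(ξ)·Dg(η)·d(ξ,η)² for all ξ,η ∈ Z) satisfying the change-of-variables formula ν(g(A)) = ∫_A Dg(ξ)^D dν(ξ) for every Borel set A ⊆ Z. Let s ≥ 0, a ∈ Z, ξ ∈ Z ∖ {a}, and let φ : Z ∖ {a} → ℂ be measurable such that the function η ↦ (φ(η) − φ(ξ)) / d_a(η,ξ)^{D+2s} is ν_a-integrable on Z_a. Then the function η' ↦ (φ(g⁻¹η') − φ(ξ)) / d_{ga}(η',gξ)^{D+2s} is ν_{ga}-integrable on Z_{ga}, and ∫_{Z_{ga}} (φ(g⁻¹η') − φ(ξ)) / d_{ga}(η',gξ)^{D+2s} dν_{ga}(η') = Dg(a)^{2s} · ∫_{Z_a} (φ(η) − φ(ξ)) / d_a(η,ξ)^{D+2s} dν_a(η). (This is the (Möb(Z),s)-conformality of the bundle of fractional Laplacians: Δ_{ga}^s(g^*φ) = Dg(a)^{2s}·g^*(Δ_a^s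 φ).) -/
/-!
By the metric-derivative identity, `d(gx, gy) = √Dg(x) √Dg(y) d(x, y)`; hence
`d_{ga}(gη, gξ) = d_a(η, ξ) / Dg(a)`, and the change-of-variables formula
`dν(gη) = Dg(η)^D dν(η)` gives `ν_{ga} = Dg(a)^{-D} · g_* ν_a`. Substituting `η' = gη`
therefore turns the integral over `Z_{ga}` into the one over `Z_a`, multiplied by
`Dg(a)^{D+2s} · Dg(a)^{-D} = Dg(a)^{2s}`.
-/

open MeasureTheory
open scoped ENNReal

-- The paper's `d_a(x, y)`, the density of `ν_a` with respect to `ν`, and `ν_a`.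
noncomputable def inversionDist {X : Type*} [PseudoMetricSpace X] (a x y : X) : ℝ :=
  dist x y / (dist x a * dist y a)

noncomputable def inversionDensity {X : Type*} [PseudoMetricSpace X] (D : ℝ) (a x : X) :
    ℝ≥0∞ :=
  ENNReal.ofReal (dist a x) ^ (-(2 * D))

noncomputable def inversionMeasure {X : Type*} [PseudoMetricSpace X] [MeasurableSpace X]
    (ν : Measure X) (D : ℝ) (a : X) : Measure X :=
  ν.withDensity (inversionDensity D a)

theorem measurable_inversionDensity {X : Type*} [PseudoMetricSpace X] [MeasurableSpace X]
    [OpensMeasurableSpace X] (D : ℝ) (a : X) : Measurable (inversionDensity D a) := by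
  unfold inversionDensity
  fun_prop

theorem MeasureTheory.Measure.map_withDensity_comp {α β : Type*} [MeasurableSpace α]
    [MeasurableSpace β] {g : α → β} (hg : Measurable g) (μ : Measure α) {f : β → ℝ≥0∞}
    (hf : Measurable f) : (μ.withDensity (f ∘ g)).map g = (μ.map g).withDensity f := by
  ext S hS
  rw [Measure.map_apply hg hS, withDensity_apply _ hS, withDensity_apply _ (hg hS),
    setLIntegral_map hS hf hg, Function.comp_def]

theorem MeasureTheory.Measure.map_withDensity_eq_of_image {α β : Type*} [MeasurableSpace α]
    [MeasurableSpace β] {μ : Measure α} {ν : Measure β} {g : α → β} (hg : g.Surjective)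
    (hgm : Measurable g) {ρ : α → ℝ≥0∞}
    (hcv : ∀ A, MeasurableSet A → ν (g '' A) = ∫⁻ x in A, ρ x ∂μ) :
    (μ.withDensity ρ).map g = ν := by
  ext S hS
  rw [Measure.map_apply hgm hS, withDensity_apply _ (hgm hS), ← hcv _ (hgm hS),
    Set.image_preimage_eq S hg]

section MetricDerivative

variable {X Y : Type*} [PseudoMetricSpace X] [PseudoMetricSpace Y] {g : X → Y} {Dg : X → ℝ}

theorem dist_eq_sqrt_mul_sqrt_mul_dist (hDg : ∀ x, 0 ≤ Dg x)
    (hmd : ∀ x y, dist (g x) (g y) ^ 2 = Dg x * Dg y * dist x y ^ 2) (x y : X) :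
    dist (g x) (g y) = √(Dg x) * √(Dg y) * dist x y := by
  rw [← Real.sqrt_sq dist_nonneg, hmd, Real.sqrt_mul (mul_nonneg (hDg x) (hDg y)),
    Real.sqrt_mul (hDg x), Real.sqrt_sq dist_nonneg]

theorem inversionDist_map (hDg : ∀ x, 0 < Dg x)
    (hmd : ∀ x y, dist (g x) (g y) ^ 2 = Dg x * Dg y * dist x y ^ 2) (a x y : X) :
    inversionDist (g a) (g x) (g y) = inversionDist a x y / Dg a := by
  have hdist := dist_eq_sqrt_mul_sqrt_mul_dist (fun x => (hDg x).le) hmd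
  have hx : √(Dg x) ≠ 0 := (Real.sqrt_pos.mpr (hDg x)).ne'
  have hy : √(Dg y) ≠ 0 := (Real.sqrt_pos.mpr (hDg y)).ne'
  -- only the factors `√(Dg _)` are cancelled: `dist x a` and `dist y a` may vanish (junk `/ 0`)
  calc inversionDist (g a) (g x) (g y)
      = √(Dg x) * √(Dg y) * dist x y /
          ((√(Dg x) * √(Dg y)) * ((dist x a * dist y a) * (√(Dg a) * √(Dg a)))) := by
        rw [inversionDist, hdist, hdist, hdist]; ring_nf
    _ = inversionDist a x y / Dg a := by
        rw [mul_div_mul_left _ _ (mul_ne_zero hx hy), Real.mul_self_sqrt (hDg a).le, inversionDist,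
          div_div]

theorem div_inversionDist_map_rpow (hDg : ∀ x, 0 < Dg x)
    (hmd : ∀ x y, dist (g x) (g y) ^ 2 = Dg x * Dg y * dist x y ^ 2) (p : ℝ) (a x y : X)
    (z : ℂ) :
    z / ((inversionDist (g a) (g x) (g y) ^ p : ℝ) : ℂ) =
      ((Dg a ^ p : ℝ) : ℂ) * (z / ((inversionDist a x y ^ p : ℝ) : ℂ)) := by
  have hnonneg : 0 ≤ inversionDist a x y := by unfold inversionDist; positivity
  rw [inversionDist_map hDg hmd, Real.div_rpow hnonneg (hDg a).le, Complex.ofReal_div,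
    div_div_eq_mul_div]
  ring

theorem ofReal_rpow_mul_inversionDensity_map (hDg : ∀ x, 0 < Dg x)
    (hmd : ∀ x y, dist (g x) (g y) ^ 2 = Dg x * Dg y * dist x y ^ 2) (D : ℝ) (a x : X) :
    ENNReal.ofReal (Dg x ^ D) * inversionDensity D (g a) (g x) =
      ENNReal.ofReal (Dg a) ^ (-D) * inversionDensity D a x := by
  have hsq : ∀ {t : ℝ}, 0 ≤ t →
      ENNReal.ofReal t ^ (-(2 * D)) = ENNReal.ofReal (t ^ 2) ^ (-D) := by
    intro t ht
    rw [ENNReal.ofReal_pow ht, ← ENNReal.rpow_natCast, ← ENNReal.rpow_mul]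
    norm_num
  have hcancel : ENNReal.ofReal (Dg x) ^ D * ENNReal.ofReal (Dg x) ^ (-D) = 1 := by
    rw [← ENNReal.rpow_add _ _ (ENNReal.ofReal_pos.mpr (hDg x)).ne' ENNReal.ofReal_ne_top]
    simp
  rw [inversionDensity, inversionDensity, hsq dist_nonneg, hmd, hsq dist_nonneg,
    ENNReal.ofReal_mul (mul_pos (hDg a) (hDg x)).le, ENNReal.ofReal_mul (hDg a).le,
    ENNReal.mul_rpow_of_ne_top (by finiteness) (by finiteness),
    ENNReal.mul_rpow_of_ne_top (by finiteness) (by finiteness),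
    ← ENNReal.ofReal_rpow_of_pos (hDg x)]
  calc _ = ENNReal.ofReal (Dg a) ^ (-D) * ENNReal.ofReal (dist a x ^ 2) ^ (-D) *
        (ENNReal.ofReal (Dg x) ^ D * ENNReal.ofReal (Dg x) ^ (-D)) := by ring
    _ = _ := by rw [hcancel, mul_one]

end MetricDerivative

section Conformality

variable {X Y : Type*} [PseudoMetricSpace X] [MeasurableSpace X] [OpensMeasurableSpace X]
  [PseudoMetricSpace Y] [MeasurableSpace Y] [OpensMeasurableSpace Y]
  {μ : Measure X} {ν : Measure Y} {Dg : X → ℝ} {D : ℝ}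

theorem inversionMeasure_map_eq_smul {g : X → Y} (hg : g.Surjective) (hgm : Measurable g)
    (hDgm : Measurable Dg) (hDg : ∀ x, 0 < Dg x)
    (hmd : ∀ x y, dist (g x) (g y) ^ 2 = Dg x * Dg y * dist x y ^ 2)
    (hcv : ∀ A, MeasurableSet A → ν (g '' A) = ∫⁻ x in A, ENNReal.ofReal (Dg x ^ D) ∂μ)
    (a : X) :
    inversionMeasure ν D (g a) =
      ENNReal.ofReal (Dg a) ^ (-D) • (inversionMeasure μ D a).map g := by
  have hρ : Measurable fun x => ENNReal.ofReal (Dg x ^ D) := by fun_prop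
  calc inversionMeasure ν D (g a)
      = ((μ.withDensity fun x => ENNReal.ofReal (Dg x ^ D)).map g).withDensity
          (inversionDensity D (g a)) := by
        rw [Measure.map_withDensity_eq_of_image hg hgm hcv, inversionMeasure]
    _ = (μ.withDensity fun x =>
          ENNReal.ofReal (Dg x ^ D) * inversionDensity D (g a) (g x)).map g := by
        rw [← Measure.map_withDensity_comp hgm _ (measurable_inversionDensity D (g a)),
          ← withDensity_mul _ hρ ((measurable_inversionDensity D (g a)).comp hgm)]
        rfl
    _ = _ := by
        simp_rw [ofReal_rpow_mul_inversionDensity_map hDg hmd]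
        rw [inversionMeasure, ← Measure.map_smul,
          ← withDensity_smul _ (measurable_inversionDensity D a)]
        rfl

variable [T1Space Y] {e : X ≃ᵐ Y}

theorem inversionMeasure_restrict_compl_map (hDgm : Measurable Dg) (hDg : ∀ x, 0 < Dg x)
    (hmd : ∀ x y, dist (e x) (e y) ^ 2 = Dg x * Dg y * dist x y ^ 2)
    (hcv : ∀ A, MeasurableSet A → ν (e '' A) = ∫⁻ x in A, ENNReal.ofReal (Dg x ^ D) ∂μ)
    (a : X) :
    (inversionMeasure ν D (e a)).restrict {e a}ᶜ =
      ENNReal.ofReal (Dg a) ^ (-D) • ((inversionMeasure μ D a).restrict {a}ᶜ).map e := by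
  rw [inversionMeasure_map_eq_smul e.surjective e.measurable hDgm hDg hmd hcv,
    Measure.restrict_smul, Measure.restrict_map e.measurable (measurableSet_singleton _).compl,
    Set.preimage_compl, ← Set.image_singleton, e.preimage_image]

theorem integrableOn_inversionMeasure_map (hDgm : Measurable Dg) (hDg : ∀ x, 0 < Dg x)
    (hmd : ∀ x y, dist (e x) (e y) ^ 2 = Dg x * Dg y * dist x y ^ 2)
    (hcv : ∀ A, MeasurableSet A → ν (e '' A) = ∫⁻ x in A, ENNReal.ofReal (Dg x ^ D) ∂μ)
    {ψ : X → ℂ} {p : ℝ} {a ξ : X}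
    (hint : IntegrableOn (fun η => ψ η / ((inversionDist a η ξ ^ p : ℝ) : ℂ)) {a}ᶜ
      (inversionMeasure μ D a)) :
    IntegrableOn (fun η' => ψ (e.symm η') / ((inversionDist (e a) η' (e ξ) ^ p : ℝ) : ℂ))
      {e a}ᶜ (inversionMeasure ν D (e a)) := by
  have hc : ENNReal.ofReal (Dg a) ^ (-D) ≠ 0 ∧ ENNReal.ofReal (Dg a) ^ (-D) ≠ ∞ := by
    constructor <;> simp [ENNReal.rpow_eq_zero_iff, ENNReal.rpow_eq_top_iff, hDg a]
  rw [IntegrableOn, inversionMeasure_restrict_compl_map hDgm hDg hmd hcv,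
    integrable_smul_measure hc.1 hc.2, integrable_map_equiv]
  simp only [Function.comp_def, e.symm_apply_apply, div_inversionDist_map_rpow hDg hmd]
  exact hint.const_mul _

theorem setIntegral_inversionMeasure_map (hDgm : Measurable Dg) (hDg : ∀ x, 0 < Dg x)
    (hmd : ∀ x y, dist (e x) (e y) ^ 2 = Dg x * Dg y * dist x y ^ 2)
    (hcv : ∀ A, MeasurableSet A → ν (e '' A) = ∫⁻ x in A, ENNReal.ofReal (Dg x ^ D) ∂μ)
    (ψ : X → ℂ) (s : ℝ) (a ξ : X) :
    ∫ η' in {e a}ᶜ, ψ (e.symm η') / ((inversionDist (e a) η' (e ξ) ^ (D + 2 * s) : ℝ) : ℂ)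
        ∂inversionMeasure ν D (e a) =
      ((Dg a ^ (2 * s) : ℝ) : ℂ) *
        ∫ η in {a}ᶜ, ψ η / ((inversionDist a η ξ ^ (D + 2 * s) : ℝ) : ℂ)
          ∂inversionMeasure μ D a := by
  rw [inversionMeasure_restrict_compl_map hDgm hDg hmd hcv, integral_smul_measure,
    integral_map_equiv]
  simp only [e.symm_apply_apply, div_inversionDist_map_rpow hDg hmd]
  rw [integral_const_mul, ← ENNReal.toReal_rpow, ENNReal.toReal_ofReal (hDg a).le,
    Complex.real_smul, ← mul_assoc, ← Complex.ofReal_mul, ← Real.rpow_add (hDg a),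
    neg_add_cancel_left]

end Conformality

theorem fractional_laplacian_conformal_general
    {Z : Type*} [MetricSpace Z] [MeasurableSpace Z] [BorelSpace Z]
    (ν : Measure Z) (D : ℝ)
    (g ginv : Z → Z)
    (hlinv : Function.LeftInverse ginv g) (hrinv : Function.RightInverse ginv g)
    (hgm : Measurable g) (hginvm : Measurable ginv)
    (Dg : Z → ℝ) (hDg : ∀ ξ, 0 < Dg ξ) (hDgm : Measurable Dg)
    (hmd : ∀ ξ η : Z, dist (g ξ) (g η) ^ 2 = Dg ξ * Dg η * dist ξ η ^ 2)
    (hcv : ∀ A : Set Z, MeasurableSet A →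
      ν (g '' A) = ∫⁻ ζ in A, ENNReal.ofReal (Dg ζ ^ D) ∂ν)
    (s : ℝ) (a ξ : Z)
    (φ : Z → ℂ)
    (hint : IntegrableOn
      (fun η => (φ η - φ ξ) /
        (((dist η ξ / (dist η a * dist ξ a)) ^ (D + 2 * s) : ℝ) : ℂ))
      ({a}ᶜ : Set Z)
      (ν.withDensity fun ζ => (ENNReal.ofReal (dist a ζ)) ^ (-(2 * D)))) :
    IntegrableOn
      (fun η' => (φ (ginv η') - φ ξ) /
        (((dist η' (g ξ) / (dist η' (g a) * dist (g ξ) (g a))) ^ (D + 2 * s) : ℝ) : ℂ))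
      ({g a}ᶜ : Set Z)
      (ν.withDensity fun ζ => (ENNReal.ofReal (dist (g a) ζ)) ^ (-(2 * D))) ∧
    (∫ η' in ({g a}ᶜ : Set Z),
        (φ (ginv η') - φ ξ) /
          (((dist η' (g ξ) / (dist η' (g a) * dist (g ξ) (g a))) ^ (D + 2 * s) : ℝ) : ℂ)
        ∂(ν.withDensity fun ζ => (ENNReal.ofReal (dist (g a) ζ)) ^ (-(2 * D)))) =
      ((Dg a ^ (2 * s) : ℝ) : ℂ) *
        ∫ η in ({a}ᶜ : Set Z),
          (φ η - φ ξ) /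
            (((dist η ξ / (dist η a * dist ξ a)) ^ (D + 2 * s) : ℝ) : ℂ)
          ∂(ν.withDensity fun ζ => (ENNReal.ofReal (dist a ζ)) ^ (-(2 * D))) := by
  let e : Z ≃ᵐ Z := ⟨⟨g, ginv, hlinv, hrinv⟩, hgm, hginvm⟩
  exact ⟨integrableOn_inversionMeasure_map (e := e) hDgm hDg hmd hcv hint,
    setIntegral_inversionMeasure_map (e := e) hDgm hDg hmd hcv (fun η => φ η - φ ξ) s a ξ⟩

/-- **`(Möb(Z),s)`-conformality of the bundle of fractional Laplacians:
`Δ_{ga}^s(g^*φ) = Dg(a)^{2s}·g^*(Δ_a^s φ)`.**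
Let `(Z,d)` be a metric space, `ν` a Borel measure, `D > 0`, and `g` a bijection with
inverse `ginv`, metric derivative `Dg`, and change-of-variables formula. Let `s ≥ 0`,
`a ∈ Z`, `ξ ≠ a`, and `φ` measurable such that `η ↦ (φ(η)−φ(ξ))/d_a(η,ξ)^{D+2s}` is
`ν_a`-integrable on `Z∖{a}`. Then `η' ↦ (φ(g⁻¹η')−φ(ξ))/d_{ga}(η',gξ)^{D+2s}` is
`ν_{ga}`-integrable on `Z∖{ga}` and its integral equals `Dg(a)^{2s}` times the former,
where `d_a(ξ,η) = d(ξ,η)/(d(ξ,a)d(η,a))` and `dν_a = d(a,·)^{−2D} dν`. -/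
theorem fractional_laplacian_conformal
    {Z : Type*} [MetricSpace Z] [MeasurableSpace Z] [BorelSpace Z]
    (ν : Measure Z) (D : ℝ) (hD : 0 < D)
    (g ginv : Z → Z) (hg : Function.Bijective g)
    (hlinv : Function.LeftInverse ginv g) (hrinv : Function.RightInverse ginv g)
    (hgm : Measurable g) (hginvm : Measurable ginv)
    (Dg : Z → ℝ) (hDg : ∀ ξ, 0 < Dg ξ) (hDgm : Measurable Dg)
    (hmd : ∀ ξ η : Z, dist (g ξ) (g η) ^ 2 = Dg ξ * Dg η * dist ξ η ^ 2)
    (hcv : ∀ A : Set Z, MeasurableSet A →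
      ν (g '' A) = ∫⁻ ζ in A, ENNReal.ofReal (Dg ζ ^ D) ∂ν)
    (s : ℝ) (hs : 0 ≤ s) (a ξ : Z) (hξa : ξ ≠ a)
    (φ : Z → ℂ) (hφ : Measurable φ)
    (hint : IntegrableOn
      (fun η => (φ η - φ ξ) /
        (((dist η ξ / (dist η a * dist ξ a)) ^ (D + 2 * s) : ℝ) : ℂ))
      ({a}ᶜ : Set Z)
      (ν.withDensity fun ζ => (ENNReal.ofReal (dist a ζ)) ^ (-(2 * D)))) :
    IntegrableOn
      (fun η' => (φ (ginv η') - φ ξ) /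
        (((dist η' (g ξ) / (dist η' (g a) * dist (g ξ) (g a))) ^ (D + 2 * s) : ℝ) : ℂ))
      ({g a}ᶜ : Set Z)
      (ν.withDensity fun ζ => (ENNReal.ofReal (dist (g a) ζ)) ^ (-(2 * D))) ∧
    (∫ η' in ({g a}ᶜ : Set Z),
        (φ (ginv η') - φ ξ) /
          (((dist η' (g ξ) / (dist η' (g a) * dist (g ξ) (g a))) ^ (D + 2 * s) : ℝ) : ℂ)
        ∂(ν.withDensity fun ζ => (ENNReal.ofReal (dist (g a) ζ)) ^ (-(2 * D)))) =
      ((Dg a ^ (2 * s) : ℝ) : ℂ) *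
        ∫ η in ({a}ᶜ : Set Z),
          (φ η - φ ξ) /
            (((dist η ξ / (dist η a * dist ξ a)) ^ (D + 2 * s) : ℝ) : ℂ)
          ∂(ν.withDensity fun ζ => (ENNReal.ofReal (dist a ζ)) ^ (-(2 * D))) :=
  fractional_laplacian_conformal_general ν D g ginv hlinv hrinv hgm hginvm Dg hDg hDgm hmd hcv s a ξ
    φ hint
end

section
/- Let (Z,d,ν) be an Ahlfors D-regular metric measure space, let g : Z → Z be a bijection with metric derivative Dg : Z → (0,∞) (i.e. d(gξ,gη)² = Dg(ξ)·Dg(η)·d(ξ,η)² for all ξ,η ∈ Z) satisfying the change-of-variables formula ν(g(A)) = ∫_A Dg(ξ)^D dν(ξ) for every Borel set A ⊆ Z, and let Dh(ξ) = Dg(g⁻¹ξ)⁻¹. Let s ∈ (0,1) and p ∈ [1,∞) with s·p < D, and set p* = p·D/(D − s·p). Suppose ψ : Z → ℂ is a measurable function which is invariant under the boundary representation, i.e. Dh(ξ)^{D/p−s}·ψ(g⁻¹ξ) = ψ(ξ) for ν-almost every ξ ∈ Z. Then the measure |ψ|^{p*}·ν is g-invariant: for every Borel set A ⊆ Z, ∫_{g⁻¹(A)}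 |ψ|^{p*} dν = ∫_A |ψ|^{p*} dν. -/
/-!
The change-of-variables formula says that `g` pushes `Dg^D · ν` forward to `ν`. In particular
`g` is non-singular, so the invariance of `ψ` may be read at `g ξ` for a.e. `ξ`, where it says
`|ψ (g ξ)| = Dg(ξ)^{-(D/p - s)} |ψ ξ|`. As `(D/p - s) · p* = D`, this is
`|ψ ∘ g|^{p*} · Dg^D = |ψ|^{p*}` a.e., and the change of variables turns `∫_A |ψ|^{p*} dν` into
`∫_{g⁻¹A} |ψ ∘ g|^{p*} Dg^D dν = ∫_{g⁻¹A} |ψ|^{p*} dν`.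
-/

open MeasureTheory
open scoped ENNReal

section ChangeOfVariables

variable {α β : Type*} [MeasurableSpace α] [MeasurableSpace β] {μ : Measure α} {ν : Measure β}
  {g : α → β} {f : α → ℝ≥0∞}

lemma map_withDensity_eq_of_measure_image_s18 (hg : Measurable g) (hgs : g.Surjective)
    (himage : ∀ A, MeasurableSet A → ν (g '' A) = ∫⁻ x in A, f x ∂μ) :
    (μ.withDensity f).map g = ν := by
  ext B hB
  rw [Measure.map_apply hg hB, withDensity_apply _ (hg hB), ← himage _ (hg hB),
    Set.image_preimage_eq B hgs]

lemma quasiMeasurePreserving_of_map_withDensity_eq (hg : Measurable g) (hf : AEMeasurable f μ)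
    (hf0 : ∀ᵐ x ∂μ, f x ≠ 0) (hmap : (μ.withDensity f).map g = ν) :
    Measure.QuasiMeasurePreserving g μ ν :=
  ⟨hg, hmap ▸ (withDensity_absolutelyContinuous' hf hf0).map hg⟩

lemma setLIntegral_eq_setLIntegral_preimage_mul (hg : Measurable g) (hf : Measurable f)
    (hmap : (μ.withDensity f).map g = ν) {F : β → ℝ≥0∞} (hF : Measurable F) {A : Set β}
    (hA : MeasurableSet A) :
    ∫⁻ y in A, F y ∂ν = ∫⁻ x in g ⁻¹' A, F (g x) * f x ∂μ := by
  rw [← hmap, setLIntegral_map hA hF hg]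
  refine (setLIntegral_withDensity_eq_setLIntegral_mul μ hf (hF.comp hg) (hg hA)).trans ?_
  simp only [Pi.mul_apply, Function.comp_apply, mul_comm]

end ChangeOfVariables

lemma enorm_rpow_mul_ofReal_rpow_eq {𝕜 : Type*} [RCLike 𝕜] {z w : 𝕜} {t α q D : ℝ} (ht : 0 < t)
    (hq : 0 ≤ q) (hαq : α * q = D) (h : ((t⁻¹ ^ α : ℝ) : 𝕜) * w = z) :
    ‖z‖ₑ ^ q * ENNReal.ofReal (t ^ D) = ‖w‖ₑ ^ q := by
  have hnorm : ‖z‖ = t⁻¹ ^ α * ‖w‖ := by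
    rw [← h, norm_mul, RCLike.norm_ofReal, abs_of_nonneg (by positivity)]
  have hreal : ‖z‖ ^ q * t ^ D = ‖w‖ ^ q := by
    rw [hnorm, Real.mul_rpow (by positivity) (norm_nonneg _), ← Real.rpow_mul (by positivity),
      hαq, Real.inv_rpow ht.le, mul_right_comm, inv_mul_cancel₀ (by positivity), one_mul]
  rw [← ofReal_norm, ← ofReal_norm, ENNReal.ofReal_rpow_of_nonneg (norm_nonneg _) hq,
    ENNReal.ofReal_rpow_of_nonneg (norm_nonneg _) hq,
    ← ENNReal.ofReal_mul (by positivity), hreal]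

theorem invariant_vector_gives_invariant_measure_general
    {Z : Type*} [MeasurableSpace Z]
    (ν : Measure Z) (D : ℝ) (hD : 0 < D)
    (g ginv : Z → Z)
    (hlinv : Function.LeftInverse ginv g) (hrinv : Function.RightInverse ginv g)
    (hgm : Measurable g)
    (Dg : Z → ℝ) (hDg : ∀ ξ, 0 < Dg ξ) (hDgm : Measurable Dg)
    (hcv : ∀ A : Set Z, MeasurableSet A →
      ν (g '' A) = ∫⁻ ξ in A, ENNReal.ofReal (Dg ξ ^ D) ∂ν)
    (s p : ℝ) (hp : 1 ≤ p) (hsp : s * p < D)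
    (ψ : Z → ℂ) (hψ : Measurable ψ)
    (hinvvec : ∀ᵐ ξ ∂ν,
      (((Dg (ginv ξ))⁻¹ ^ (D / p - s) : ℝ) : ℂ) * ψ (ginv ξ) = ψ ξ) :
    ∀ A : Set Z, MeasurableSet A →
      (∫⁻ ξ in g ⁻¹' A, (‖ψ ξ‖₊ : ℝ≥0∞) ^ (p * D / (D - s * p)) ∂ν) =
        ∫⁻ ξ in A, (‖ψ ξ‖₊ : ℝ≥0∞) ^ (p * D / (D - s * p)) ∂ν := by
  intro A hA
  simp only [← enorm_eq_nnnorm]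
  set q := p * D / (D - s * p) with hq_def
  have hp0 : 0 < p := zero_lt_one.trans_le hp
  have hDsp : 0 < D - s * p := sub_pos.2 hsp
  have hq : 0 ≤ q := by positivity
  have hexp : (D / p - s) * q = D := by
    have : D - p * s ≠ 0 := by rw [mul_comm p s]; exact hDsp.ne'
    rw [hq_def, mul_comm s p]
    field_simp
  have hf : Measurable fun ξ ↦ ENNReal.ofReal (Dg ξ ^ D) := (hDgm.pow_const D).ennreal_ofReal
  have hmap := map_withDensity_eq_of_measure_image_s18 hgm hrinv.surjective hcv
  have hinv_g : ∀ᵐ ξ ∂ν, ‖ψ (g ξ)‖ₑ ^ q * ENNReal.ofReal (Dg ξ ^ D) = ‖ψ ξ‖ₑ ^ q := by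
    have hquasi := quasiMeasurePreserving_of_map_withDensity_eq hgm hf.aemeasurable
      (ae_of_all _ fun ξ ↦ (ENNReal.ofReal_pos.2 (Real.rpow_pos_of_pos (hDg ξ) D)).ne') hmap
    filter_upwards [hquasi.ae hinvvec] with ξ hξ
    rw [hlinv ξ] at hξ
    exact enorm_rpow_mul_ofReal_rpow_eq (hDg ξ) hq hexp hξ
  rw [setLIntegral_eq_setLIntegral_preimage_mul hgm hf hmap
    (hψ.enorm.pow_const q) hA]
  exact setLIntegral_congr_fun_ae (hgm hA) (hinv_g.mono fun ξ h _ ↦ h.symm)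

/-- **An invariant vector of the boundary representation yields an invariant measure.**
Let `(Z,d,ν)` be an Ahlfors `D`-regular metric measure space, `g` a bijection with
inverse `ginv`, metric derivative `Dg`, and change-of-variables formula; let
`Dh(ξ) = Dg(g⁻¹ξ)⁻¹`. Let `s ∈ (0,1)`, `p ∈ [1,∞)` with `s·p < D`, and
`p* = p·D/(D−s·p)`. If `ψ : Z → ℂ` is measurable and satisfies
`Dh(ξ)^{D/p−s}·ψ(g⁻¹ξ) = ψ(ξ)` for `ν`-a.e. `ξ`, then the measure `|ψ|^{p*}·ν` is
`g`-invariant: `∫_{g⁻¹(A)} |ψ|^{p*} dν = ∫_A |ψ|^{p*} dν` for every Borel `A ⊆ Z`. -/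
theorem invariant_vector_gives_invariant_measure
    {Z : Type*} [MetricSpace Z] [CompleteSpace Z] [MeasurableSpace Z] [BorelSpace Z]
    (hperf : ∀ z : Z, (nhdsWithin z {z}ᶜ).NeBot)
    (ν : Measure Z) (D c : ℝ) (hD : 0 < D) (hc : 1 ≤ c)
    (hA : ∀ (z : Z) (r : ℝ), 0 < r → ENNReal.ofReal r < EMetric.diam (Set.univ : Set Z) →
      ENNReal.ofReal (c⁻¹ * r ^ D) ≤ ν (Metric.ball z r) ∧
        ν (Metric.ball z r) ≤ ENNReal.ofReal (c * r ^ D))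
    (g ginv : Z → Z) (hg : Function.Bijective g)
    (hlinv : Function.LeftInverse ginv g) (hrinv : Function.RightInverse ginv g)
    (hgm : Measurable g) (hginvm : Measurable ginv)
    (Dg : Z → ℝ) (hDg : ∀ ξ, 0 < Dg ξ) (hDgm : Measurable Dg)
    (hmd : ∀ ξ η : Z, dist (g ξ) (g η) ^ 2 = Dg ξ * Dg η * dist ξ η ^ 2)
    (hcv : ∀ A : Set Z, MeasurableSet A →
      ν (g '' A) = ∫⁻ ξ in A, ENNReal.ofReal (Dg ξ ^ D) ∂ν)
    (s p : ℝ) (hs : 0 < s) (hs1 : s < 1) (hp : 1 ≤ p) (hsp : s * p < D)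
    (ψ : Z → ℂ) (hψ : Measurable ψ)
    (hinvvec : ∀ᵐ ξ ∂ν,
      (((Dg (ginv ξ))⁻¹ ^ (D / p - s) : ℝ) : ℂ) * ψ (ginv ξ) = ψ ξ) :
    ∀ A : Set Z, MeasurableSet A →
      (∫⁻ ξ in g ⁻¹' A, (‖ψ ξ‖₊ : ℝ≥0∞) ^ (p * D / (D - s * p)) ∂ν) =
        ∫⁻ ξ in A, (‖ψ ξ‖₊ : ℝ≥0∞) ^ (p * D / (D - s * p)) ∂ν :=
  invariant_vector_gives_invariant_measure_general ν D hD g ginv hlinv hrinv hgm Dg hDg hDgm hcv s p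
    hp hsp ψ hψ hinvvec
end
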